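/- arXiv:1807.10042 — 13 statements merged into one kernel-verified Lean document; each statement's English description precedes it below -/
import Mathlib

section
/- Let J ≥ 2 be an integer, K a positive integer, σ² > 0, u > 0, v > 0 and N > 0 real. Define A_{Ψ₀}(w) = (σ²(J−1)/(KN))·((K(v+u)+1)/w + (Ku+1)/(1−(J−1)w)) for w ∈ (0, 1/(J−1)). Then the point w* = 1/( (J−1) + √(J−1)·√((Ku+1)/(K(v+u)+1)) ) lies in (0, 1/(J−1)) and is the unique minimizer of A_{Ψ₀} on (0, 1/(J−1)), i.e. A_{Ψ₀}(w*) ≤ A_{Ψ₀}(w) for all w ∈ (0, 1/(J−1)) with equality only for w = w*. -/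
/-- The A-optimal weight for estimation of the population treatment effects:
`w* = 1/((J-1) + √(J-1)·√((Ku+1)/(K(v+u)+1)))` lies in `(0, 1/(J-1))` and is the
unique minimizer of the A-criterion there. -/
theorem stmt_1 (J K : ℕ) (hJ : 2 ≤ J) (hK : 1 ≤ K)
    (σ2 u v N : ℝ) (hσ : 0 < σ2) (hu : 0 < u) (hv : 0 < v) (hN : 0 < N)
    (A : ℝ → ℝ)
    (hA : ∀ w : ℝ, A w = (σ2 * ((J : ℝ) - 1) / ((K : ℝ) * N)) *
        (((K : ℝ) * (v + u) + 1) / w + ((K : ℝ) * u + 1) / (1 - ((J : ℝ) - 1) * w)))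
    (wstar : ℝ)
    (hw : wstar = 1 / (((J : ℝ) - 1) +
        Real.sqrt ((J : ℝ) - 1) * Real.sqrt (((K : ℝ) * u + 1) / ((K : ℝ) * (v + u) + 1)))) :
    wstar ∈ Set.Ioo (0 : ℝ) (1 / ((J : ℝ) - 1)) ∧
      ∀ w ∈ Set.Ioo (0 : ℝ) (1 / ((J : ℝ) - 1)),
        A wstar ≤ A w ∧ (A wstar = A w → w = wstar) := by
  have hJ2 : (2:ℝ) ≤ (J:ℝ) := by exact_mod_cast hJ
  have hK1 : (1:ℝ) ≤ (K:ℝ) := by exact_mod_cast hK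
  set m : ℝ := (J:ℝ) - 1 with hmdef
  have hm0 : 0 < m := by simp only [hmdef]; linarith
  set a : ℝ := (K:ℝ) * (v + u) + 1 with hadef
  set b : ℝ := (K:ℝ) * u + 1 with hbdef
  have ha : 0 < a := by have : 0 < (K:ℝ) := by linarith
                        simp only [hadef]; nlinarith
  have hb : 0 < b := by have : 0 < (K:ℝ) := by linarith
                        simp only [hbdef]; nlinarith
  set sa : ℝ := Real.sqrt a with hsadef
  set sb : ℝ := Real.sqrt (m * b) with hsbdef
  set c : ℝ := Real.sqrt m * Real.sqrt (b / a) with hcdef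
  have hsa2 : sa ^ 2 = a := Real.sq_sqrt ha.le
  have hsb2 : sb ^ 2 = m * b := Real.sq_sqrt (by positivity)
  have hsa0 : 0 < sa := Real.sqrt_pos.mpr ha
  have hsb0 : 0 < sb := Real.sqrt_pos.mpr (by positivity)
  have hc0 : 0 < c := by
    apply mul_pos (Real.sqrt_pos.mpr hm0) (Real.sqrt_pos.mpr (by positivity))
  have hsac : sa * c = sb := by
    rw [hsadef, hcdef, hsbdef, ← Real.sqrt_mul hm0.le, ← Real.sqrt_mul ha.le]
    congr 1
    field_simp
  have hmc : 0 < m + c := by linarith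
  -- hw now reads wstar = 1/(m + c)
  have hw0 : 0 < wstar := by rw [hw]; positivity
  have hwlt : wstar < 1 / m := by
    rw [hw]
    exact one_div_lt_one_div_of_lt hm0 (by linarith)
  set C : ℝ := σ2 * m / ((K:ℝ) * N) with hCdef
  have hC : 0 < C := by
    have hK0 : (0:ℝ) < K := by linarith
    positivity
  set M : ℝ := a * m + b + 2 * sa * sb with hMdef
  have key : ∀ w : ℝ, 0 < w → w < 1 / m →
      A w = C * (M + (sa * (1 - m * w) - sb * w) ^ 2 / (w * (1 - m * w))) := by
    intro w hw1 hw2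
    have ht : 0 < 1 - m * w := by
      have h2 := (lt_div_iff₀ hm0).mp hw2
      have h3 : w * m = m * w := mul_comm w m
      linarith
    rw [hA w]
    have : a / w + b / (1 - m * w)
        = M + (sa * (1 - m * w) - sb * w) ^ 2 / (w * (1 - m * w)) := by
      rw [hMdef]
      have hw1' : w ≠ 0 := hw1.ne'
      have ht' : 1 - w * m ≠ 0 := by rw [mul_comm]; exact ht.ne'
      field_simp
      ring_nf
      linear_combination (-(1 - m*w)^2) * hsa2 - w^2 * hsb2
    rw [this]
  have hewstar : sa * (1 - m * wstar) - sb * wstar = 0 := by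
    rw [hw]
    field_simp
    linear_combination hsac
  have hAstar : A wstar = C * M := by
    rw [key wstar hw0 hwlt, hewstar]
    simp
  refine ⟨⟨hw0, hwlt⟩, ?_⟩
  rintro w ⟨hw1, hw2⟩
  have ht : 0 < 1 - m * w := by
    have h2 := (lt_div_iff₀ hm0).mp hw2
    have h3 : w * m = m * w := mul_comm w m
    linarith
  have hAw : A w = C * (M + (sa * (1 - m * w) - sb * w) ^ 2 / (w * (1 - m * w))) :=
    key w hw1 hw2
  have hx : 0 ≤ (sa * (1 - m * w) - sb * w) ^ 2 / (w * (1 - m * w)) := by positivity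
  constructor
  · rw [hAstar, hAw]
    exact mul_le_mul_of_nonneg_left (le_add_of_nonneg_right hx) hC.le
  · intro heq
    rw [hAstar, hAw] at heq
    have hx0 : (sa * (1 - m * w) - sb * w) ^ 2 / (w * (1 - m * w)) = 0 := by
      have := mul_left_cancel₀ hC.ne' heq
      linarith
    have he : sa * (1 - m * w) - sb * w = 0 := by
      have hd : w * (1 - m * w) ≠ 0 := by positivity
      have := (div_eq_zero_iff.mp hx0).resolve_right hd
      exact pow_eq_zero_iff (n := 2) (by norm_num) |>.mp this
    -- from he : sa (1 - m w) = sb w, so w (sa m + sb) = sa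
    have hpos : 0 < sa * m + sb := by positivity
    have h1 : w * (sa * m + sb) = sa := by linarith [he]
    have h2 : wstar * (sa * m + sb) = sa := by
      rw [hw]
      field_simp
      linear_combination -hsac
    have := h1.trans h2.symm
    exact mul_right_cancel₀ hpos.ne' this
end

section
/- Let J ≥ 2 be an integer, K a positive integer, σ² > 0, u > 0, v > 0, and let n ≥ 1, m ≥ 1 be integers with N = (J−1)n + m. Define the N(J−1)×N(J−1) real matrices: B₁ = σ²·(𝟙_N 𝟙_Nᵀ) ⊗ ( (Ku+1)/(Km)·𝟙_{J−1}𝟙_{J−1}ᵀ + (K(v+u)+1)/(Kn)·I_{J−1} ); B₂ = −σ²v·𝟙_N ⊗ R, where R is the (J−1)×N(J−1) matrix formed by horizontally concatenating, for j = 1,…,J−1, the blocks (1/n)𝟙_nᵀ ⊗ (e_j e_jᵀ) (each of size (J−1)×n(J−1)), followed by the (J−1)×m(J−1) zero matrix; B₃ = σ²v·block-diag( I_{n(J−1)²} − (Kv/(K(v+u)+1))·Diag_{j=1}^{J−1}( (I_n − (1/n)𝟙_n𝟙_nᵀ) ⊗ (e_j e_jᵀ) ), I_{m(J−1)} ). Then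 tr(B₁ + B₂ + B₂ᵀ + B₃) = σ²(J−1)·( N(K(v+u)+1)/(Kn) + N(Ku+1)/(Km) + v( N − 2 − Kv(n−1)/(K(v+u)+1) ) ). -/
open Matrix

/-- Individuals: for each of the `J-1` treatment groups, `n` individuals, followed by
`m` individuals in the control group (so `N = (J-1)n + m` in total). -/
abbrev MGInd (J n m : ℕ) := (Fin (J - 1) × Fin n) ⊕ Fin m

/-- Index for the vector of all individual treatment effects: an individual together
with one of the `J-1` treatment-effect components. -/
abbrev MGIdx (J n m : ℕ) := MGInd J n m × Fin (J - 1)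

/-- `B₁ = σ²·(𝟙_N 𝟙_Nᵀ) ⊗ ((Ku+1)/(Km)·𝟙_{J-1}𝟙_{J-1}ᵀ + (K(v+u)+1)/(Kn)·I_{J-1})`,
written entrywise. -/
noncomputable def MGB1 (J n m K : ℕ) (σ2 u v : ℝ) : Matrix (MGIdx J n m) (MGIdx J n m) ℝ :=
  Matrix.of fun p q =>
    σ2 * (((K : ℝ) * u + 1) / ((K : ℝ) * (m : ℝ)) +
      if p.2 = q.2 then ((K : ℝ) * (v + u) + 1) / ((K : ℝ) * (n : ℝ)) else 0)

/-- `B₂ = -σ²v·𝟙_N ⊗ R`, where `R` is the horizontal concatenation over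
`j = 1,…,J-1` of the blocks `(1/n)𝟙_nᵀ ⊗ (e_j e_jᵀ)` followed by a zero block for the
control group, written entrywise. -/
noncomputable def MGB2 (J n m K : ℕ) (σ2 u v : ℝ) : Matrix (MGIdx J n m) (MGIdx J n m) ℝ :=
  Matrix.of fun p q =>
    -(σ2 * v) *
      (match q.1 with
        | Sum.inl (j, _) =>
            if p.2 = j ∧ q.2 = j then (1 : ℝ) / (n : ℝ) else 0
        | Sum.inr _ => 0)

/-- `B₃ = σ²v·block-diag(I_{n(J-1)²} - (Kv/(K(v+u)+1))·Diag_{j}((I_n - (1/n)𝟙_n𝟙_nᵀ) ⊗ (e_j e_jᵀ)),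
I_{m(J-1)})`, written entrywise. -/
noncomputable def MGB3 (J n m K : ℕ) (σ2 u v : ℝ) : Matrix (MGIdx J n m) (MGIdx J n m) ℝ :=
  Matrix.of fun p q =>
    σ2 * v *
      ((if p = q then (1 : ℝ) else 0) -
        (match p.1, q.1 with
          | Sum.inl (j, l), Sum.inl (j', l') =>
              if j = j' then
                ((K : ℝ) * v / ((K : ℝ) * (v + u) + 1)) *
                  ((if l = l' then (1 : ℝ) else 0) - 1 / (n : ℝ)) *
                  (if p.2 = j then (1 : ℝ) else 0) * (if q.2 = j then (1 : ℝ) else 0)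
              else 0
          | _, _ => 0))

set_option maxHeartbeats 1000000 in
/-- The trace of the mean squared error matrix `B₁ + B₂ + B₂ᵀ + B₃` of the BLUP of
the individual treatment effects (the A-criterion for prediction). -/
theorem stmt_4 (J K : ℕ) (hJ : 2 ≤ J) (hK : 1 ≤ K)
    (σ2 u v : ℝ) (hσ : 0 < σ2) (hu : 0 < u) (hv : 0 < v)
    (n m N : ℕ) (hn : 1 ≤ n) (hm : 1 ≤ m) (hN : N = (J - 1) * n + m) :
    (MGB1 J n m K σ2 u v + MGB2 J n m K σ2 u v + (MGB2 J n m K σ2 u v)ᵀ +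
        MGB3 J n m K σ2 u v).trace =
      σ2 * ((J : ℝ) - 1) *
        ((N : ℝ) * ((K : ℝ) * (v + u) + 1) / ((K : ℝ) * (n : ℝ)) +
          (N : ℝ) * ((K : ℝ) * u + 1) / ((K : ℝ) * (m : ℝ)) +
          v * ((N : ℝ) - 2 -
            (K : ℝ) * v * ((n : ℝ) - 1) / ((K : ℝ) * (v + u) + 1))) := by

  have hJ1 : 1 ≤ J := le_trans one_le_two hJ
  have hJc : ((J - 1 : ℕ) : ℝ) = (J : ℝ) - 1 := by
    rw [Nat.cast_sub hJ1]; norm_num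
  have hNc : (N : ℝ) = ((J : ℝ) - 1) * (n : ℝ) + (m : ℝ) := by
    rw [hN]; push_cast [Nat.cast_sub hJ1]; ring
  have hK0 : ((K : ℝ)) ≠ 0 := by positivity
  have hn0 : ((n : ℝ)) ≠ 0 := by positivity
  have hm0 : ((m : ℝ)) ≠ 0 := by positivity
  have hD0 : ((K : ℝ) * (v + u) + 1) ≠ 0 := by positivity
  rw [Matrix.trace]
  simp only [Matrix.diag, Matrix.add_apply, Matrix.transpose_apply, MGB1, MGB2, MGB3,
    Matrix.of_apply, if_pos rfl, and_self]
  rw [Fintype.sum_prod_type]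
  rw [Fintype.sum_sum_type]
  simp only [Fintype.sum_prod_type]
  simp only [if_pos rfl, eq_self_iff_true, if_true]
  simp only [Finset.sum_add_distrib, Finset.sum_const, Finset.card_univ, Fintype.card_fin,
    Finset.sum_ite_eq', Finset.mem_univ, if_true, nsmul_eq_mul, Finset.sum_sub_distrib,
    mul_ite, mul_zero, mul_one, ite_mul, zero_mul]
  rw [hNc, hJc]
  simp only [mul_sub, mul_ite, mul_one, mul_zero, Finset.sum_sub_distrib,
    Finset.sum_ite_eq', Finset.mem_univ, if_true, if_pos rfl, Finset.sum_const,
    Finset.card_univ, Fintype.card_fin, nsmul_eq_mul, hJc, sub_zero]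
  field_simp
  ring
end

section
/- Let J ≥ 2 be an integer, K a positive integer, σ² > 0, u > 0, v > 0 and N > 0 real. Define A_Ψ(w) = σ²(J−1)·( (K(v+u)+1)/(Kw) + (Ku+1)/(K(1−(J−1)w)) + v( N − 2 − Kv(Nw−1)/(K(v+u)+1) ) ) for w ∈ (0, 1/(J−1)). Then A_Ψ is strictly convex on (0, 1/(J−1)) and attains a unique minimum there; i.e. there exists a unique w* ∈ (0, 1/(J−1)) with A_Ψ(w*) ≤ A_Ψ(w) for all w ∈ (0, 1/(J−1)). -/
open Set Filter Topology

private lemma inv_strictConvexOn : StrictConvexOn ℝ (Ioi (0:ℝ)) fun x : ℝ => x⁻¹ := by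
  simpa [zpow_neg, zpow_one] using strictConvexOn_zpow (m := -1) (by norm_num) (by norm_num)

private lemma smul_strictConvexOn {s : Set ℝ} {f : ℝ → ℝ} {c : ℝ} (hc : 0 < c)
    (hf : StrictConvexOn ℝ s f) : StrictConvexOn ℝ s fun x => c * f x := by
  refine ⟨hf.1, fun x hx y hy hxy p q hp hq hpq => ?_⟩
  have key := hf.2 hx hy hxy hp hq hpq
  simp only [smul_eq_mul] at key ⊢
  nlinarith [mul_lt_mul_of_pos_left key hc]

private lemma main_strictConvex {J' r ca cb p0 q0 : ℝ} (hJ' : 0 < J') (hr : r = 1 / J')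
    (hca : 0 < ca) (hcb : 0 < cb) :
    StrictConvexOn ℝ (Ioo (0:ℝ) r) fun w => ca * w⁻¹ + cb * (1 - J' * w)⁻¹ + (p0 + q0 * w) := by
  have g1 : StrictConvexOn ℝ (Ioo (0:ℝ) r) fun w => ca * w⁻¹ :=
    (smul_strictConvexOn hca inv_strictConvexOn).subset (fun x hx => hx.1) (convex_Ioo _ _)
  have g2 : StrictConvexOn ℝ (Ioo (0:ℝ) r) fun w => cb * (1 - J' * w)⁻¹ := by
    refine ⟨convex_Ioo _ _, fun x hx y hy hxy p q hp hq hpq => ?_⟩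
    have hx' : 0 < 1 - J' * x := by
      have := hx.2; rw [hr, lt_div_iff₀ hJ'] at this; nlinarith
    have hy' : 0 < 1 - J' * y := by
      have := hy.2; rw [hr, lt_div_iff₀ hJ'] at this; nlinarith
    have hne : (1 - J' * x) ≠ (1 - J' * y) := by
      intro h
      exact hxy (mul_left_cancel₀ hJ'.ne' (by linarith : J' * x = J' * y))
    have key := inv_strictConvexOn.2 (mem_Ioi.mpr hx') (mem_Ioi.mpr hy') hne hp hq hpq
    simp only [smul_eq_mul] at key ⊢
    have harg : 1 - J' * (p * x + q * y) = p * (1 - J' * x) + q * (1 - J' * y) := by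
      linear_combination -hpq
    rw [harg]
    nlinarith [mul_lt_mul_of_pos_left key hcb]
  have g3 : ConvexOn ℝ (Ioo (0:ℝ) r) fun w => p0 + q0 * w := by
    refine ⟨convex_Ioo _ _, fun x _ y _ p q hp hq hpq => ?_⟩
    simp only [smul_eq_mul]
    have : p0 + q0 * (p * x + q * y) = p * (p0 + q0 * x) + q * (p0 + q0 * y) := by
      linear_combination -p0 * hpq
    linarith
  exact (g1.add g2).add_convexOn g3

/-- The A-criterion for prediction of the individual treatment effects is strictly
convex on `(0, 1/(J-1))` and attains a unique minimum there. -/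
theorem stmt_6 (J K : ℕ) (hJ : 2 ≤ J) (hK : 1 ≤ K)
    (σ2 u v N : ℝ) (hσ : 0 < σ2) (hu : 0 < u) (hv : 0 < v) (hN : 0 < N)
    (A : ℝ → ℝ)
    (hA : ∀ w : ℝ, A w = σ2 * ((J : ℝ) - 1) *
        (((K : ℝ) * (v + u) + 1) / ((K : ℝ) * w) +
          ((K : ℝ) * u + 1) / ((K : ℝ) * (1 - ((J : ℝ) - 1) * w)) +
          v * (N - 2 - (K : ℝ) * v * (N * w - 1) / ((K : ℝ) * (v + u) + 1)))) :
    StrictConvexOn ℝ (Set.Ioo (0 : ℝ) (1 / ((J : ℝ) - 1))) A ∧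
      ∃! wstar : ℝ, wstar ∈ Set.Ioo (0 : ℝ) (1 / ((J : ℝ) - 1)) ∧
        ∀ w ∈ Set.Ioo (0 : ℝ) (1 / ((J : ℝ) - 1)), A wstar ≤ A w := by
  have hJ2 : (2:ℝ) ≤ (J:ℝ) := by exact_mod_cast hJ
  have hJ' : (0:ℝ) < (J:ℝ) - 1 := by linarith
  have hK1 : (1:ℝ) ≤ (K:ℝ) := by exact_mod_cast hK
  have hKpos : (0:ℝ) < (K:ℝ) := by linarith
  have hapos : (0:ℝ) < (K:ℝ)*(v+u)+1 := by positivity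
  set r : ℝ := 1 / ((J:ℝ) - 1) with hrdef
  have hrpos : 0 < r := by positivity
  set ca : ℝ := σ2*((J:ℝ)-1)*((K:ℝ)*(v+u)+1)/(K:ℝ) with hcadef
  set cb : ℝ := σ2*((J:ℝ)-1)*((K:ℝ)*u+1)/(K:ℝ) with hcbdef
  set p0 : ℝ := σ2*((J:ℝ)-1)*(v*(N-2) + (K:ℝ)*v*v/((K:ℝ)*(v+u)+1)) with hp0def
  set q0 : ℝ := -(σ2*((J:ℝ)-1)*(K:ℝ)*v*v*N/((K:ℝ)*(v+u)+1)) with hq0def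
  have hca : 0 < ca := by rw [hcadef]; positivity
  have hcb : 0 < cb := by rw [hcbdef]; positivity
  have hrepr : ∀ w, A w = ca * w⁻¹ + cb * (1-((J:ℝ)-1)*w)⁻¹ + (p0 + q0 * w) := by
    intro w
    rw [hA w, hcadef, hcbdef, hp0def, hq0def]
    simp only [div_eq_mul_inv, mul_inv]
    ring
  have hAeq : A = fun w => ca * w⁻¹ + cb * (1-((J:ℝ)-1)*w)⁻¹ + (p0 + q0 * w) := funext hrepr
  -- strict convexity
  have hscv : StrictConvexOn ℝ (Ioo (0:ℝ) r) A := by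
    rw [hAeq]; exact main_strictConvex hJ' hrdef hca hcb
  refine ⟨hscv, ?_⟩
  -- positivity of 1 - (J-1)w on the interval
  have hpos2 : ∀ w ∈ Ioo (0:ℝ) r, 0 < 1 - ((J:ℝ)-1)*w := by
    intro w hw
    have := hw.2; rw [hrdef, lt_div_iff₀ hJ'] at this; nlinarith
  -- continuity on the open interval
  have hcont : ContinuousOn A (Ioo (0:ℝ) r) := by
    rw [hAeq]
    refine ContinuousOn.add (ContinuousOn.add ?_ ?_) ?_
    · exact continuousOn_const.mul (continuousOn_id.inv₀ fun x hx => hx.1.ne')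
    · exact continuousOn_const.mul
        (((continuousOn_const.sub (continuousOn_const.mul continuousOn_id))).inv₀
          fun x hx => (hpos2 x hx).ne')
    · exact continuousOn_const.add (continuousOn_const.mul continuousOn_id)
  -- tendsto atTop at the left endpoint
  have ht0 : Tendsto A (𝓝[>] (0:ℝ)) atTop := by
    rw [hAeq]
    have h1 : Tendsto (fun w : ℝ => ca * w⁻¹) (𝓝[>] (0:ℝ)) atTop :=
      tendsto_inv_nhdsGT_zero.const_mul_atTop hca
    have h2 : Tendsto (fun w : ℝ => cb * (1-((J:ℝ)-1)*w)⁻¹) (𝓝[>] (0:ℝ)) (𝓝 (cb * (1-((J:ℝ)-1)*0)⁻¹)) := by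
      refine Tendsto.mono_left ?_ nhdsWithin_le_nhds
      exact (continuousAt_const.mul ((continuousAt_const.sub
        (continuousAt_const.mul continuousAt_id)).inv₀ (by norm_num))).tendsto
    have h3 : Tendsto (fun w : ℝ => p0 + q0 * w) (𝓝[>] (0:ℝ)) (𝓝 (p0 + q0 * 0)) := by
      refine Tendsto.mono_left ?_ nhdsWithin_le_nhds
      exact (continuousAt_const.add (continuousAt_const.mul continuousAt_id)).tendsto
    exact (h1.atTop_add h2).atTop_add h3
  -- tendsto atTop at the right endpoint
  have htr : Tendsto A (𝓝[<] r) atTop := by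
    rw [hAeq]
    have hb1 : Tendsto (fun w : ℝ => 1 - ((J:ℝ)-1)*w) (𝓝[<] r) (𝓝[>] (0:ℝ)) := by
      rw [tendsto_nhdsWithin_iff]
      constructor
      · have : Tendsto (fun w : ℝ => 1 - ((J:ℝ)-1)*w) (𝓝 r) (𝓝 (1 - ((J:ℝ)-1)*r)) :=
          ((continuous_const.sub (continuous_const.mul continuous_id)).tendsto r).mono_left le_rfl
        have hval : 1 - ((J:ℝ)-1)*r = 0 := by
          rw [hrdef]; field_simp; norm_num
        rw [hval] at this
        exact this.mono_left nhdsWithin_le_nhds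
      · filter_upwards [self_mem_nhdsWithin] with w hw
        have hwr : w < r := hw
        have : ((J:ℝ)-1)*w < 1 := by
          rw [hrdef, lt_div_iff₀ hJ'] at hwr; nlinarith
        exact mem_Ioi.mpr (by linarith)
    have h2 : Tendsto (fun w : ℝ => cb * (1-((J:ℝ)-1)*w)⁻¹) (𝓝[<] r) atTop :=
      (tendsto_inv_nhdsGT_zero.comp hb1).const_mul_atTop hcb
    have h1 : Tendsto (fun w : ℝ => ca * w⁻¹) (𝓝[<] r) (𝓝 (ca * r⁻¹)) := by
      refine Tendsto.mono_left ?_ nhdsWithin_le_nhds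
      exact (continuousAt_const.mul (continuousAt_id.inv₀ hrpos.ne')).tendsto
    have h3 : Tendsto (fun w : ℝ => p0 + q0 * w) (𝓝[<] r) (𝓝 (p0 + q0 * r)) := by
      refine Tendsto.mono_left ?_ nhdsWithin_le_nhds
      exact (continuousAt_const.add (continuousAt_const.mul continuousAt_id)).tendsto
    exact (h1.add_atTop h2).atTop_add h3
  -- existence of a minimizer
  set w0 : ℝ := r / 2 with hw0def
  have hw0 : w0 ∈ Ioo (0:ℝ) r := ⟨by positivity, by rw [hw0def]; linarith⟩
  set M : ℝ := A w0 with hMdef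
  obtain ⟨u1, hu1, hu1sub⟩ :=
    mem_nhdsGT_iff_exists_Ioo_subset.mp (ht0.eventually_gt_atTop M)
  obtain ⟨l1, hl1, hl1sub⟩ :=
    mem_nhdsLT_iff_exists_Ioo_subset.mp (htr.eventually_gt_atTop M)
  set c1 : ℝ := min u1 w0 with hc1def
  set c2 : ℝ := max l1 w0 with hc2def
  have hc1pos : 0 < c1 := lt_min hu1 hw0.1
  have hc2lt : c2 < r := max_lt hl1 hw0.2
  have hc1le : c1 ≤ w0 := min_le_right _ _
  have hc2ge : w0 ≤ c2 := le_max_right _ _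
  have hIccsub : Icc c1 c2 ⊆ Ioo (0:ℝ) r := fun x hx =>
    ⟨lt_of_lt_of_le hc1pos hx.1, lt_of_le_of_lt hx.2 hc2lt⟩
  obtain ⟨x, hxmem, hxmin⟩ := isCompact_Icc.exists_isMinOn ⟨w0, hc1le, hc2ge⟩
    (hcont.mono hIccsub)
  have hxM : A x ≤ M := hxmin ⟨hc1le, hc2ge⟩
  have hxIoo : x ∈ Ioo (0:ℝ) r := hIccsub hxmem
  have hglob : ∀ w ∈ Ioo (0:ℝ) r, A x ≤ A w := by
    intro w hw
    by_cases hwi : w ∈ Icc c1 c2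
    · exact hxmin hwi
    · rcases not_and_or.mp (fun h => hwi ⟨h.1, h.2⟩) with h | h
      · push_neg at h
        have hwu : w < u1 := lt_of_lt_of_le h (min_le_left _ _)
        have : M < A w := hu1sub ⟨hw.1, hwu⟩
        linarith
      · push_neg at h
        have hwl : l1 < w := lt_of_le_of_lt (le_max_left _ _) h
        have : M < A w := hl1sub ⟨hwl, hw.2⟩
        linarith
  refine ⟨x, ⟨hxIoo, hglob⟩, ?_⟩
  rintro y ⟨hyIoo, hymin⟩
  exact hscv.eq_of_isMinOn (isMinOn_iff.mpr hymin) (isMinOn_iff.mpr hglob) hyIoo hxIoo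
end

section
/- Let J ≥ 2 be an integer, K a positive integer, u > 0 and v > 0 real. Define D(w) = ln( (K(v+u)+1)/w + (J−1)(Ku+1)/(1−(J−1)w) ) + (J−2)·ln( (K(v+u)+1)/w ) for w ∈ (0, 1/(J−1)). Then the point w* = (J−2+z)/((J−1)(J+z)), where z = √( 4(J−1)Kv/(Ku+1) + J² ), lies in (0, 1/(J−1)) and is the unique minimizer of D on (0, 1/(J−1)). -/
set_option maxHeartbeats 1000000 in
/-- The D-optimal weight for estimation of the population treatment effects:
`w* = (J-2+z)/((J-1)(J+z))` with `z = √(4(J-1)Kv/(Ku+1) + J²)` lies in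
`(0, 1/(J-1))` and is the unique minimizer of the D-criterion there. -/
theorem stmt_8 (J K : ℕ) (hJ : 2 ≤ J) (hK : 1 ≤ K)
    (u v : ℝ) (hu : 0 < u) (hv : 0 < v)
    (D : ℝ → ℝ)
    (hD : ∀ w : ℝ, D w =
        Real.log (((K : ℝ) * (v + u) + 1) / w +
            ((J : ℝ) - 1) * ((K : ℝ) * u + 1) / (1 - ((J : ℝ) - 1) * w)) +
          ((J : ℝ) - 2) * Real.log (((K : ℝ) * (v + u) + 1) / w))
    (z wstar : ℝ)
    (hz : z = Real.sqrt (4 * ((J : ℝ) - 1) * (K : ℝ) * v / ((K : ℝ) * u + 1) + (J : ℝ) ^ 2))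
    (hw : wstar = ((J : ℝ) - 2 + z) / (((J : ℝ) - 1) * ((J : ℝ) + z))) :
    wstar ∈ Set.Ioo (0 : ℝ) (1 / ((J : ℝ) - 1)) ∧
      ∀ w ∈ Set.Ioo (0 : ℝ) (1 / ((J : ℝ) - 1)), w ≠ wstar → D wstar < D w := by
  have hDfun : D = fun w => Real.log (((K : ℝ) * (v + u) + 1) / w +
            ((J : ℝ) - 1) * ((K : ℝ) * u + 1) / (1 - ((J : ℝ) - 1) * w)) +
          ((J : ℝ) - 2) * Real.log (((K : ℝ) * (v + u) + 1) / w) := funext hD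
  subst hDfun
  set jR : ℝ := (J : ℝ) with hjR
  have hj : (2 : ℝ) ≤ jR := by rw [hjR]; exact_mod_cast hJ
  have hK1 : (1 : ℝ) ≤ (K : ℝ) := by exact_mod_cast hK
  set a : ℝ := (K : ℝ) * (v + u) + 1 with hadef
  set b : ℝ := (K : ℝ) * u + 1 with hbdef
  set c : ℝ := (K : ℝ) * v with hcdef
  have hb : 0 < b := by positivity
  have hc : 0 < c := by positivity
  have hab : a = c + b := by rw [hadef, hbdef, hcdef]; ring
  have ha : 0 < a := by positivity
  have hm0 : 0 < jR - 1 := by linarith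
  have hm1 : (1 : ℝ) ≤ jR - 1 := by linarith
  -- facts about z
  have hargpos : 0 < 4 * (jR - 1) * (K : ℝ) * v / b + jR ^ 2 := by positivity
  have hz0 : 0 < z := by rw [hz]; exact Real.sqrt_pos.mpr hargpos
  have hz2 : z ^ 2 = 4 * (jR - 1) * (K : ℝ) * v / b + jR ^ 2 := by
    rw [hz, Real.sq_sqrt hargpos.le]
  have hKv : c = b * (z ^ 2 - jR ^ 2) / (4 * (jR - 1)) := by
    rw [hz2, hcdef]
    field_simp
    ring
  -- wstar is in the interval
  have hdenpos : 0 < (jR - 1) * (jR + z) := by positivity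
  have hw0 : 0 < wstar := by
    rw [hw]
    apply div_pos (by linarith) hdenpos
  have hw1 : wstar < 1 / (jR - 1) := by
    rw [hw, div_lt_div_iff₀ hdenpos hm0]
    nlinarith
  -- the quadratic q
  set S : ℝ := 2 * (jR - 1) * a - (jR - 2) * b with hSdef
  set q : ℝ → ℝ := fun w => -((jR - 1) ^ 2) * c * w ^ 2 + S * w - a with hqdef
  have hq0 : q wstar = 0 := by
    rw [hqdef]
    simp only
    rw [hw, hSdef, hab, hKv]
    have h1 : jR - 1 ≠ 0 := hm0.ne'
    have h2 : jR + z ≠ 0 := by positivity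
    field_simp
    ring
  have hfac : ∀ x : ℝ, q x = (x - wstar) * (S - (jR - 1) ^ 2 * c * (x + wstar)) := by
    intro x
    have := hq0
    rw [hqdef] at this ⊢
    simp only at this ⊢
    linear_combination this
  have hq1m : q (1 / (jR - 1)) = b / (jR - 1) := by
    rw [hqdef]
    simp only
    rw [hSdef, hab]
    field_simp
    ring
  -- L at the right endpoint is positive
  have hLend : 0 < S - (jR - 1) ^ 2 * c * (1 / (jR - 1) + wstar) := by
    have h1 := hfac (1 / (jR - 1))
    rw [hq1m] at h1
    have h2 : 0 < b / (jR - 1) := by positivity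
    have h3 : 0 < 1 / (jR - 1) - wstar := by linarith
    nlinarith
  have hL : ∀ x : ℝ, x < 1 / (jR - 1) → 0 < S - (jR - 1) ^ 2 * c * (x + wstar) := by
    intro x hx
    nlinarith [sq_nonneg (jR - 1), mul_pos (mul_pos (mul_pos hm0 hm0) hc) (sub_pos.mpr hx)]
  -- derivative of D
  have hderiv : ∀ x ∈ Set.Ioo (0 : ℝ) (1 / (jR - 1)),
      HasDerivAt (fun w => Real.log (a / w + (jR - 1) * b / (1 - (jR - 1) * w)) +
          (jR - 2) * Real.log (a / w))
        ((jR - 1) * q x /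
          (x ^ 2 * (1 - (jR - 1) * x) ^ 2 * (a / x + (jR - 1) * b / (1 - (jR - 1) * x)))) x := by
    intro x hx
    obtain ⟨hx0, hxu⟩ := hx
    have hden : 0 < 1 - (jR - 1) * x := by
      nlinarith [(lt_div_iff₀ hm0).mp hxu]
    have hNpos : 0 < a / x + (jR - 1) * b / (1 - (jR - 1) * x) := by positivity
    have hinv : HasDerivAt (fun w : ℝ => a / w) ((0 * x - a * 1) / x ^ 2) x :=
      (hasDerivAt_const x a).div (hasDerivAt_id x) hx0.ne'
    have hlin : HasDerivAt (fun w : ℝ => 1 - (jR - 1) * w) (0 - (jR - 1) * 1) x :=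
      (hasDerivAt_const x (1 : ℝ)).sub ((hasDerivAt_id x).const_mul (jR - 1))
    have hfrac : HasDerivAt (fun w : ℝ => (jR - 1) * b / (1 - (jR - 1) * w))
        ((0 * (1 - (jR - 1) * x) - (jR - 1) * b * (0 - (jR - 1) * 1)) / (1 - (jR - 1) * x) ^ 2) x :=
      (hasDerivAt_const x ((jR - 1) * b)).div hlin hden.ne'
    have hN := hinv.add hfrac
    have hlog1 := hN.log hNpos.ne'
    have haxpos : 0 < a / x := by positivity
    have hlog2 := (hinv.log haxpos.ne').const_mul (jR - 2)
    have hsum := hlog1.add hlog2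
    convert hsum using 1
    · rfl
    · rfl
    · rfl
    rw [hqdef, hSdef]
    simp only [Pi.add_apply]
    field_simp
    ring
  -- q is negative left of wstar, positive right of wstar (within the interval)
  have hqneg : ∀ x ∈ Set.Ioo (0 : ℝ) wstar, q x < 0 := by
    intro x hx
    rw [hfac x]
    exact mul_neg_of_neg_of_pos (by linarith [hx.2]) (hL x (by linarith [hx.2]))
  have hqpos : ∀ x ∈ Set.Ioo wstar (1 / (jR - 1)), 0 < q x := by
    intro x hx
    rw [hfac x]
    exact mul_pos (by linarith [hx.1]) (hL x hx.2)
  -- denominators are positive on the interval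
  have hDenpos : ∀ x ∈ Set.Ioo (0 : ℝ) (1 / (jR - 1)),
      0 < x ^ 2 * (1 - (jR - 1) * x) ^ 2 * (a / x + (jR - 1) * b / (1 - (jR - 1) * x)) := by
    intro x hx
    obtain ⟨hx0, hxu⟩ := hx
    have hden : 0 < 1 - (jR - 1) * x := by nlinarith [(lt_div_iff₀ hm0).mp hxu]
    positivity
  -- strict antitonicity on (0, wstar]
  have hsub1 : Set.Ioc (0 : ℝ) wstar ⊆ Set.Ioo (0 : ℝ) (1 / (jR - 1)) := by
    intro x hx; exact ⟨hx.1, lt_of_le_of_lt hx.2 hw1⟩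
  have hsub2 : Set.Ico wstar (1 / (jR - 1)) ⊆ Set.Ioo (0 : ℝ) (1 / (jR - 1)) := by
    intro x hx; exact ⟨lt_of_lt_of_le hw0 hx.1, hx.2⟩
  have hanti : StrictAntiOn (fun w => Real.log (a / w + (jR - 1) * b / (1 - (jR - 1) * w)) +
      (jR - 2) * Real.log (a / w)) (Set.Ioc (0 : ℝ) wstar) := by
    apply strictAntiOn_of_deriv_neg (convex_Ioc _ _)
    · intro x hx
      exact ((hderiv x (hsub1 hx)).differentiableAt).continuousAt.continuousWithinAt
    · intro x hx
      rw [interior_Ioc] at hx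
      have hx' : x ∈ Set.Ioo (0 : ℝ) (1 / (jR - 1)) := ⟨hx.1, lt_trans hx.2 hw1⟩
      rw [(hderiv x hx').deriv]
      exact div_neg_of_neg_of_pos
        (mul_neg_of_pos_of_neg hm0 (hqneg x hx)) (hDenpos x hx')
  have hmono : StrictMonoOn (fun w => Real.log (a / w + (jR - 1) * b / (1 - (jR - 1) * w)) +
      (jR - 2) * Real.log (a / w)) (Set.Ico wstar (1 / (jR - 1))) := by
    apply strictMonoOn_of_deriv_pos (convex_Ico _ _)
    · intro x hx
      exact ((hderiv x (hsub2 hx)).differentiableAt).continuousAt.continuousWithinAt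
    · intro x hx
      rw [interior_Ico] at hx
      have hx' : x ∈ Set.Ioo (0 : ℝ) (1 / (jR - 1)) := ⟨lt_trans hw0 hx.1, hx.2⟩
      rw [(hderiv x hx').deriv]
      exact div_pos (mul_pos hm0 (hqpos x hx)) (hDenpos x hx')
  refine ⟨⟨hw0, hw1⟩, ?_⟩
  intro w hwmem hne
  rcases lt_or_gt_of_ne hne with hlt | hgt
  · exact hanti ⟨hwmem.1, hlt.le⟩ ⟨hw0, le_rfl⟩ hlt
  · exact hmono ⟨le_rfl, hw1⟩ ⟨hgt.le, hwmem.2⟩ hgt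
end

section
/- Let J ≥ 2 be an integer, K a positive integer, u > 0 and v > 0 real. Define E(w) = (K(v+u)+1)/w + (J−1)(Ku+1)/(1−(J−1)w) for w ∈ (0, 1/(J−1)). Then the point w* = 1/( (J−1)(1 + √((Ku+1)/(K(v+u)+1))) ) lies in (0, 1/(J−1)) and is the unique minimizer of E on (0, 1/(J−1)). -/
/-- The E-optimal weight for estimation of the population treatment effects:
`w* = 1/((J-1)(1 + √((Ku+1)/(K(v+u)+1))))` lies in `(0, 1/(J-1))` and is the
unique minimizer of the E-criterion there. -/
theorem stmt_10 (J K : ℕ) (hJ : 2 ≤ J) (hK : 1 ≤ K)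
    (u v : ℝ) (hu : 0 < u) (hv : 0 < v)
    (E : ℝ → ℝ)
    (hE : ∀ w : ℝ, E w = ((K : ℝ) * (v + u) + 1) / w +
        ((J : ℝ) - 1) * ((K : ℝ) * u + 1) / (1 - ((J : ℝ) - 1) * w))
    (wstar : ℝ)
    (hw : wstar = 1 / (((J : ℝ) - 1) *
        (1 + Real.sqrt (((K : ℝ) * u + 1) / ((K : ℝ) * (v + u) + 1))))) :
    wstar ∈ Set.Ioo (0 : ℝ) (1 / ((J : ℝ) - 1)) ∧
      ∀ w ∈ Set.Ioo (0 : ℝ) (1 / ((J : ℝ) - 1)), w ≠ wstar → E wstar < E w := by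
  have hJ1 : (2:ℝ) ≤ (J:ℝ) := by exact_mod_cast hJ
  have hK1 : (1:ℝ) ≤ (K:ℝ) := by exact_mod_cast hK
  set m : ℝ := (J:ℝ) - 1 with hmdef
  have hm0 : 0 < m := by simp only [hmdef]; linarith
  set a : ℝ := (K:ℝ)*(v+u)+1 with hadef
  set b : ℝ := (K:ℝ)*u+1 with hbdef
  have ha : 0 < a := by simp only [hadef]; nlinarith
  have hb : 0 < b := by simp only [hbdef]; nlinarith
  set sa := Real.sqrt a with hsadef
  set sb := Real.sqrt b with hsbdef
  have hsa0 : 0 < sa := Real.sqrt_pos.mpr ha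
  have hsb0 : 0 < sb := Real.sqrt_pos.mpr hb
  have hsa2 : sa^2 = a := Real.sq_sqrt ha.le
  have hsb2 : sb^2 = b := Real.sq_sqrt hb.le
  have hsum0 : 0 < sa + sb := by linarith
  have hsqrt : Real.sqrt (b/a) = sb/sa := Real.sqrt_div hb.le a
  clear_value a b sa sb m
  have hws : wstar = sa/(m*(sa+sb)) := by
    rw [hw, hsqrt]
    rw [div_eq_div_iff (by positivity) (by positivity)]
    field_simp
  have hmem : wstar ∈ Set.Ioo (0:ℝ) (1/m) := by
    constructor
    · rw [hws]; positivity
    · rw [hws, div_lt_div_iff₀ (by positivity) hm0]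
      nlinarith
  refine ⟨hmem, ?_⟩
  rintro w ⟨hw0, hw1⟩ hwne
  have ht : 0 < 1 - m*w := by
    rw [lt_div_iff₀ hm0] at hw1; linarith [mul_comm m w ▸ hw1]
  have hEstar : E wstar = m*(sa+sb)^2 := by
    rw [hE, hws, ← hsa2, ← hsb2]
    have hden : 1 - m * (sa / (m * (sa + sb))) = sb/(sa+sb) := by
      field_simp
      ring
    rw [hden]
    field_simp
  have hne : sa*(1-m*w) - sb*(m*w) ≠ 0 := by
    intro h
    apply hwne
    rw [hws]
    rw [eq_div_iff (by positivity)]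
    nlinarith [h]
  have key : E w - m*(sa+sb)^2 = (sa*(1-m*w) - sb*(m*w))^2 / (w*(1-m*w)) := by
    rw [hE, ← hsa2, ← hsb2]
    rw [div_add_div _ _ hw0.ne' ht.ne', eq_div_iff (mul_pos hw0 ht).ne', sub_mul, div_mul_cancel₀ _ (mul_pos hw0 ht).ne']
    ring
  have hpos : 0 < (sa*(1-m*w) - sb*(m*w))^2 / (w*(1-m*w)) :=
    div_pos (by positivity) (by positivity)
  rw [hEstar]
  linarith [key ▸ hpos]
end

section
/- Let J ≥ 2 be an integer and K a positive integer. Define w*_D(u,v) = (J−2+z(u,v))/((J−1)(J+z(u,v))) with z(u,v) = √(4(J−1)Kv/(Ku+1) + J²), and w*_E(u,v) = 1/( (J−1)(1+√((Ku+1)/(K(v+u)+1))) ), for u, v > 0. Then: (i) for fixed v > 0, w*_D(u,v) → 1/J and w*_E(u,v) → 1/(2(J−1)) as u → ∞; (ii) for fixed u > 0, w*_D(u,v) → 1/(J−1) and w*_E(u,v) → 1/(J−1) as v → ∞. -/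
open Filter

lemma my_sqrt_atTop : Tendsto Real.sqrt atTop atTop := by
  rw [tendsto_atTop_atTop]
  intro b
  refine ⟨max (b ^ 2) 0, fun a ha => ?_⟩
  have h1 : Real.sqrt (b ^ 2) ≤ Real.sqrt a :=
    Real.sqrt_le_sqrt (le_trans (le_max_left _ _) ha)
  have h2 : b ≤ Real.sqrt (b ^ 2) := by
    rw [Real.sqrt_sq_eq_abs]; exact le_abs_self b
  linarith

/-- Limiting behavior of the D- and E-optimal weights for estimation of the
population treatment effects: (i) as `u → ∞`, `w*_D → 1/J` and `w*_E → 1/(2(J-1))`;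
(ii) as `v → ∞`, both tend to `1/(J-1)`. -/
theorem stmt_11 (J K : ℕ) (hJ : 2 ≤ J) (hK : 1 ≤ K)
    (z wD wE : ℝ → ℝ → ℝ)
    (hz : ∀ u v : ℝ, z u v =
        Real.sqrt (4 * ((J : ℝ) - 1) * (K : ℝ) * v / ((K : ℝ) * u + 1) + (J : ℝ) ^ 2))
    (hwD : ∀ u v : ℝ, wD u v =
        ((J : ℝ) - 2 + z u v) / (((J : ℝ) - 1) * ((J : ℝ) + z u v)))
    (hwE : ∀ u v : ℝ, wE u v = 1 / (((J : ℝ) - 1) *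
        (1 + Real.sqrt (((K : ℝ) * u + 1) / ((K : ℝ) * (v + u) + 1))))) :
    (∀ v : ℝ, 0 < v →
      Tendsto (fun u : ℝ => wD u v) atTop (nhds (1 / (J : ℝ))) ∧
      Tendsto (fun u : ℝ => wE u v) atTop (nhds (1 / (2 * ((J : ℝ) - 1))))) ∧
    (∀ u : ℝ, 0 < u →
      Tendsto (fun v : ℝ => wD u v) atTop (nhds (1 / ((J : ℝ) - 1))) ∧
      Tendsto (fun v : ℝ => wE u v) atTop (nhds (1 / ((J : ℝ) - 1)))) := by
  have hJ2 : (2 : ℝ) ≤ (J : ℝ) := by exact_mod_cast hJ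
  have hK1 : (1 : ℝ) ≤ (K : ℝ) := by exact_mod_cast hK
  have hKpos : (0 : ℝ) < (K : ℝ) := by linarith
  have hJ1 : ((J : ℝ) - 1) ≠ 0 := by intro h; linarith [h]
  have hJ0 : (J : ℝ) ≠ 0 := by positivity
  constructor
  · intro v hv
    -- denominators tend to atTop
    have hden : Tendsto (fun u : ℝ => (K : ℝ) * u + 1) atTop atTop :=
      tendsto_atTop_add_const_right _ 1 (tendsto_id.const_mul_atTop hKpos)
    have hden2 : Tendsto (fun u : ℝ => (K : ℝ) * (v + u) + 1) atTop atTop := by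
      have : Tendsto (fun u : ℝ => v + u) atTop atTop :=
        tendsto_atTop_add_const_left _ v tendsto_id
      exact tendsto_atTop_add_const_right _ 1 (this.const_mul_atTop hKpos)
    -- z u v → J
    have hzlim : Tendsto (fun u : ℝ => z u v) atTop (nhds (J : ℝ)) := by
      have h0 : Tendsto (fun u : ℝ =>
          4 * ((J : ℝ) - 1) * (K : ℝ) * v / ((K : ℝ) * u + 1)) atTop (nhds 0) :=
        tendsto_const_nhds.div_atTop hden
      have h1 : Tendsto (fun u : ℝ =>
          4 * ((J : ℝ) - 1) * (K : ℝ) * v / ((K : ℝ) * u + 1) + (J : ℝ) ^ 2)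
          atTop (nhds (0 + (J : ℝ) ^ 2)) := h0.add tendsto_const_nhds
      have h2 := (Real.continuous_sqrt.tendsto _).comp h1
      simp only [zero_add] at h2
      rw [Real.sqrt_sq (by linarith : (0 : ℝ) ≤ (J : ℝ))] at h2
      exact Tendsto.congr (fun u => (hz u v).symm) h2
    constructor
    · -- wD
      have h3 : Tendsto (fun u : ℝ => ((J : ℝ) - 2 + z u v) /
          (((J : ℝ) - 1) * ((J : ℝ) + z u v))) atTop
          (nhds (((J : ℝ) - 2 + (J : ℝ)) / (((J : ℝ) - 1) * ((J : ℝ) + (J : ℝ))))) := by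
        refine Tendsto.div (tendsto_const_nhds.add hzlim)
          (tendsto_const_nhds.mul (tendsto_const_nhds.add hzlim)) ?_
        have : (0 : ℝ) < ((J : ℝ) - 1) * ((J : ℝ) + (J : ℝ)) := by nlinarith
        exact ne_of_gt this
      have heq : ((J : ℝ) - 2 + (J : ℝ)) / (((J : ℝ) - 1) * ((J : ℝ) + (J : ℝ)))
          = 1 / (J : ℝ) := by
        field_simp
        ring
      rw [heq] at h3
      exact Tendsto.congr (fun u => (hwD u v).symm) h3
    · -- wE
      have hsub : Tendsto (fun u : ℝ => (K : ℝ) * v / ((K : ℝ) * (v + u) + 1))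
          atTop (nhds 0) := tendsto_const_nhds.div_atTop hden2
      have hratio : Tendsto (fun u : ℝ =>
          ((K : ℝ) * u + 1) / ((K : ℝ) * (v + u) + 1)) atTop (nhds 1) := by
        have h1 : Tendsto (fun u : ℝ => 1 - (K : ℝ) * v / ((K : ℝ) * (v + u) + 1))
            atTop (nhds (1 - 0)) := tendsto_const_nhds.sub hsub
        rw [sub_zero] at h1
        refine h1.congr' ?_
        filter_upwards [eventually_ge_atTop (0 : ℝ)] with u hu
        have hpos : (0 : ℝ) < (K : ℝ) * (v + u) + 1 := by nlinarith
        field_simp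
        ring
      have hsq : Tendsto (fun u : ℝ =>
          Real.sqrt (((K : ℝ) * u + 1) / ((K : ℝ) * (v + u) + 1))) atTop
          (nhds 1) := by
        have := (Real.continuous_sqrt.tendsto _).comp hratio
        simpa [Function.comp_def] using this
      have h4 : Tendsto (fun u : ℝ => 1 / (((J : ℝ) - 1) *
          (1 + Real.sqrt (((K : ℝ) * u + 1) / ((K : ℝ) * (v + u) + 1))))) atTop
          (nhds (1 / (((J : ℝ) - 1) * (1 + 1)))) := by
        refine Tendsto.div tendsto_const_nhds
          (tendsto_const_nhds.mul (tendsto_const_nhds.add hsq)) ?_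
        have : (0 : ℝ) < ((J : ℝ) - 1) * (1 + 1) := by nlinarith
        exact ne_of_gt this
      have heq : 1 / (((J : ℝ) - 1) * (1 + 1)) = 1 / (2 * ((J : ℝ) - 1)) := by
        ring_nf
      rw [heq] at h4
      exact Tendsto.congr (fun u => (hwE u v).symm) h4
  · intro u hu
    have hDpos : (0 : ℝ) < (K : ℝ) * u + 1 := by nlinarith
    have hc : (0 : ℝ) < 4 * ((J : ℝ) - 1) * (K : ℝ) / ((K : ℝ) * u + 1) := by
      apply div_pos (by nlinarith) hDpos
    have hinner : Tendsto (fun v : ℝ =>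
        4 * ((J : ℝ) - 1) * (K : ℝ) * v / ((K : ℝ) * u + 1) + (J : ℝ) ^ 2)
        atTop atTop := by
      apply tendsto_atTop_add_const_right
      have h1 : Tendsto (fun v : ℝ =>
          (4 * ((J : ℝ) - 1) * (K : ℝ) / ((K : ℝ) * u + 1)) * v) atTop atTop :=
        tendsto_id.const_mul_atTop hc
      refine h1.congr (fun v => ?_)
      field_simp
    have hzlim : Tendsto (fun v : ℝ => z u v) atTop atTop := by
      have := my_sqrt_atTop.comp hinner
      exact Tendsto.congr (fun v => (hz u v).symm) this
    constructor
    · -- wD → 1/(J-1)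
      have hzden : ∀ v : ℝ, (0 : ℝ) < (J : ℝ) + z u v := by
        intro v
        have : (0 : ℝ) ≤ z u v := by rw [hz]; exact Real.sqrt_nonneg _
        linarith
      have hterm : Tendsto (fun v : ℝ =>
          2 / (((J : ℝ) - 1) * ((J : ℝ) + z u v))) atTop (nhds 0) := by
        refine tendsto_const_nhds.div_atTop ?_
        have h1 : Tendsto (fun v : ℝ => (J : ℝ) + z u v) atTop atTop :=
          tendsto_atTop_add_const_left _ _ hzlim
        exact h1.const_mul_atTop (by linarith : (0 : ℝ) < (J : ℝ) - 1)
      have h2 : Tendsto (fun v : ℝ =>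
          1 / ((J : ℝ) - 1) - 2 / (((J : ℝ) - 1) * ((J : ℝ) + z u v))) atTop
          (nhds (1 / ((J : ℝ) - 1) - 0)) := tendsto_const_nhds.sub hterm
      rw [sub_zero] at h2
      refine h2.congr (fun v => ?_)
      have hzd := hzden v
      rw [hwD]
      field_simp
      ring
    · -- wE → 1/(J-1)
      have hden2 : Tendsto (fun v : ℝ => (K : ℝ) * (v + u) + 1) atTop atTop := by
        have : Tendsto (fun v : ℝ => v + u) atTop atTop :=
          tendsto_atTop_add_const_right _ u tendsto_id
        exact tendsto_atTop_add_const_right _ 1 (this.const_mul_atTop hKpos)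
      have hratio : Tendsto (fun v : ℝ =>
          ((K : ℝ) * u + 1) / ((K : ℝ) * (v + u) + 1)) atTop (nhds 0) :=
        tendsto_const_nhds.div_atTop hden2
      have hsq : Tendsto (fun v : ℝ =>
          Real.sqrt (((K : ℝ) * u + 1) / ((K : ℝ) * (v + u) + 1))) atTop
          (nhds 0) := by
        have := (Real.continuous_sqrt.tendsto _).comp hratio
        simpa [Function.comp_def] using this
      have h4 : Tendsto (fun v : ℝ => 1 / (((J : ℝ) - 1) *
          (1 + Real.sqrt (((K : ℝ) * u + 1) / ((K : ℝ) * (v + u) + 1))))) atTop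
          (nhds (1 / (((J : ℝ) - 1) * (1 + 0)))) := by
        refine Tendsto.div tendsto_const_nhds
          (tendsto_const_nhds.mul (tendsto_const_nhds.add hsq)) ?_
        have : (0 : ℝ) < ((J : ℝ) - 1) * (1 + 0) := by nlinarith
        exact ne_of_gt this
      have heq : 1 / (((J : ℝ) - 1) * (1 + 0)) = 1 / ((J : ℝ) - 1) := by
        norm_num
      rw [heq] at h4
      exact Tendsto.congr (fun v => (hwE u v).symm) h4
end

section
/- Let K be a positive integer, σ² > 0, u > 0, v > 0, and let n ≥ 1, m ≥ 1 be integers with N = n + m. Define the real matrices H₁₁ = σ²(Ku+1)·( (N/(Knm))·𝟙_n𝟙_nᵀ + (v/(K(u+v)+1))·(I_n − (1/n)𝟙_n𝟙_nᵀ) ) (size n×n), H₁₂ = σ²(Ku+1)·(N/(Knm))·𝟙_n𝟙_mᵀ (size n×m), and H₂₂ = σ²·( ((K(u+v)+1)/(Kn) + (Ku+1)/(Km))·𝟙_m𝟙_mᵀ + v·I_m ) (size m×m), and let M be the N×N block matrix with blocks H₁₁, H₁₂ in the first block row and H₁₂ᵀ, H₂₂ in the second. Then for every real λ, det(M − λ·I_N)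 = (λ₁ − λ)^{n−1} · (λ₂ − λ)^{m−1} · (λ₃ − λ) · (λ₄ − λ), where λ₁ = σ²v(Ku+1)/(K(v+u)+1), λ₂ = σ²v, and λ₃, λ₄ = (σ²N/(2Knm))·( Kmv + N(Ku+1) ± √s ) with s = K²m²v² + 2Km(m−n)(Ku+1)v + N²(Ku+1)². In particular the eigenvalues of M are λ₁, λ₂, λ₃, λ₄ with algebraic multiplicities n−1, m−1, 1, 1. -/
open Matrix

lemma aux_det {n m : ℕ} (hn : 0 < n) (hm : 0 < m) (a b c d e : ℝ) (hb : b ≠ 0) (he : e ≠ 0) :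
    (Matrix.fromBlocks
        (Matrix.of (fun _ _ => a) + b • (1 : Matrix (Fin n) (Fin n) ℝ))
        (Matrix.of (fun _ _ => c))
        (Matrix.of (fun _ _ => c))
        (Matrix.of (fun _ _ => d) + e • (1 : Matrix (Fin m) (Fin m) ℝ))).det
    = b ^ (n - 1) * e ^ (m - 1)
        * ((b + n * a) * (e + m * d) - (n * m) * (c * c)) := by
  set d0 : Fin n ⊕ Fin m → ℝ := Sum.elim (fun _ => b) (fun _ => e) with hd0
  set U : Matrix (Fin n ⊕ Fin m) (Fin 2) ℝ :=
    Matrix.of (Sum.elim (fun _ => ![1, 0]) (fun _ => ![0, 1])) with hU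
  set S : Matrix (Fin 2) (Fin 2) ℝ := !![a, c; c, d] with hS
  have hsplit : Matrix.fromBlocks
        (Matrix.of (fun _ _ => a) + b • (1 : Matrix (Fin n) (Fin n) ℝ))
        (Matrix.of (fun _ _ => c))
        (Matrix.of (fun _ _ => c))
        (Matrix.of (fun _ _ => d) + e • (1 : Matrix (Fin m) (Fin m) ℝ))
      = Matrix.diagonal d0 + U * (S * Uᵀ) := by
    ext i j
    cases i <;> cases j <;>
      simp [Matrix.mul_apply, Matrix.vecMul, dotProduct, Matrix.transpose_apply,
        Matrix.diagonal, Matrix.one_apply, Fin.sum_univ_two, hU, hS, hd0, Matrix.fromBlocks] <;>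
      split_ifs <;> ring
  have hdet_d : (Matrix.diagonal d0).det = b ^ n * e ^ m := by
    simp [Matrix.det_diagonal, Fintype.prod_sum_type, hd0]
  have hunit : IsUnit (Matrix.diagonal d0).det := by
    rw [hdet_d]
    exact (isUnit_iff_ne_zero.2 (mul_ne_zero (pow_ne_zero _ hb) (pow_ne_zero _ he)))
  rw [hsplit, Matrix.det_add_mul U (S * Uᵀ) hunit]
  have hinv : (Matrix.diagonal d0)⁻¹ = Matrix.diagonal (fun p => (d0 p)⁻¹) := by
    apply Matrix.inv_eq_right_inv
    rw [Matrix.diagonal_mul_diagonal]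
    have : ∀ p, d0 p * (d0 p)⁻¹ = 1 := by
      rintro (p | p) <;> simp [hd0, hb, he]
    simp only [this]
    exact Matrix.diagonal_one
  have hT : S * Uᵀ * (Matrix.diagonal d0)⁻¹ * U
      = !![(n : ℝ) * a * b⁻¹, (m : ℝ) * c * e⁻¹; (n : ℝ) * c * b⁻¹, (m : ℝ) * d * e⁻¹] := by
    rw [hinv]
    ext i j
    fin_cases i <;> fin_cases j <;>
      simp [Matrix.mul_apply, Matrix.vecMul, dotProduct, Matrix.transpose_apply,
        Fintype.sum_sum_type, Matrix.diagonal, Fin.sum_univ_two, hU, hS, hd0,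
        Finset.mul_sum, Finset.sum_mul] <;> ring
  rw [hT, hdet_d, Matrix.det_fin_two]
  obtain ⟨n', rfl⟩ : ∃ n', n = n' + 1 := ⟨n - 1, (Nat.succ_pred_eq_of_pos hn).symm⟩
  obtain ⟨m', rfl⟩ : ∃ m', m = m' + 1 := ⟨m - 1, (Nat.succ_pred_eq_of_pos hm).symm⟩
  simp only [Matrix.of_apply, Matrix.add_apply, Matrix.one_apply, Matrix.cons_val', Matrix.cons_val_zero,
    Matrix.cons_val_one, Matrix.head_cons, Matrix.head_fin_const, Matrix.empty_val',
    Matrix.cons_val_fin_one, Nat.add_sub_cancel, if_true, if_false]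
  push_cast
  rw [pow_succ, pow_succ]
  field_simp
  ring

/-- Eigenvalue factorization of the characteristic polynomial of the mean squared
error matrix of the BLUP of the individual treatment effects in the two-group case
(Lemma 2). -/
theorem stmt_12 (K : ℕ) (hK : 1 ≤ K)
    (σ2 u v : ℝ) (hσ : 0 < σ2) (hu : 0 < u) (hv : 0 < v)
    (n m N : ℕ) (hn : 1 ≤ n) (hm : 1 ≤ m) (hN : N = n + m)
    (H11 : Matrix (Fin n) (Fin n) ℝ)
    (hH11 : H11 = (σ2 * ((K : ℝ) * u + 1)) •
        (((N : ℝ) / ((K : ℝ) * (n : ℝ) * (m : ℝ))) • Matrix.of (fun _ _ => (1 : ℝ)) +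
          (v / ((K : ℝ) * (u + v) + 1)) •
            ((1 : Matrix (Fin n) (Fin n) ℝ) - ((1 : ℝ) / (n : ℝ)) • Matrix.of (fun _ _ => (1 : ℝ)))))
    (H12 : Matrix (Fin n) (Fin m) ℝ)
    (hH12 : H12 = (σ2 * ((K : ℝ) * u + 1) * ((N : ℝ) / ((K : ℝ) * (n : ℝ) * (m : ℝ)))) •
        Matrix.of (fun _ _ => (1 : ℝ)))
    (H22 : Matrix (Fin m) (Fin m) ℝ)
    (hH22 : H22 = σ2 •
        (((((K : ℝ) * (u + v) + 1) / ((K : ℝ) * (n : ℝ)) +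
            ((K : ℝ) * u + 1) / ((K : ℝ) * (m : ℝ))) • Matrix.of (fun _ _ => (1 : ℝ))) +
          v • (1 : Matrix (Fin m) (Fin m) ℝ)))
    (M : Matrix (Fin n ⊕ Fin m) (Fin n ⊕ Fin m) ℝ)
    (hM : M = Matrix.fromBlocks H11 H12 H12ᵀ H22)
    (lam1 lam2 lam3 lam4 s : ℝ)
    (hs : s = (K : ℝ) ^ 2 * (m : ℝ) ^ 2 * v ^ 2 +
        2 * (K : ℝ) * (m : ℝ) * ((m : ℝ) - (n : ℝ)) * ((K : ℝ) * u + 1) * v +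
        (N : ℝ) ^ 2 * ((K : ℝ) * u + 1) ^ 2)
    (hlam1 : lam1 = σ2 * v * ((K : ℝ) * u + 1) / ((K : ℝ) * (v + u) + 1))
    (hlam2 : lam2 = σ2 * v)
    (hlam3 : lam3 = (σ2 * (N : ℝ) / (2 * (K : ℝ) * (n : ℝ) * (m : ℝ))) *
        ((K : ℝ) * (m : ℝ) * v + (N : ℝ) * ((K : ℝ) * u + 1) + Real.sqrt s))
    (hlam4 : lam4 = (σ2 * (N : ℝ) / (2 * (K : ℝ) * (n : ℝ) * (m : ℝ))) *
        ((K : ℝ) * (m : ℝ) * v + (N : ℝ) * ((K : ℝ) * u + 1) - Real.sqrt s)) :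
    ∀ lam : ℝ,
      (M - lam • 1).det =
        (lam1 - lam) ^ (n - 1) * (lam2 - lam) ^ (m - 1) * (lam3 - lam) * (lam4 - lam) := by
  have hn0 : (n : ℝ) ≠ 0 := Nat.cast_ne_zero.2 (by omega)
  have hm0 : (m : ℝ) ≠ 0 := Nat.cast_ne_zero.2 (by omega)
  have hK0 : (K : ℝ) ≠ 0 := Nat.cast_ne_zero.2 (by omega)
  have hden1 : (K : ℝ) * (u + v) + 1 ≠ 0 := by positivity
  have hden2 : (K : ℝ) * (v + u) + 1 ≠ 0 := by positivity
  have hs0 : 0 ≤ s := by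
    rw [hs, hN]
    push_cast
    nlinarith [sq_nonneg ((K : ℝ) * m * v + ((m : ℝ) - (n : ℝ)) * ((K : ℝ) * u + 1)),
      mul_nonneg (mul_nonneg (Nat.cast_nonneg (α := ℝ) n) (Nat.cast_nonneg (α := ℝ) m))
        (sq_nonneg ((K : ℝ) * u + 1))]
  have hw : Real.sqrt s * Real.sqrt s = s := Real.mul_self_sqrt hs0
  set α : ℝ := σ2 * ((K : ℝ) * u + 1) * ((N : ℝ) / ((K : ℝ) * n * m)) - lam1 / n with hα
  set γ : ℝ := σ2 * ((K : ℝ) * u + 1) * ((N : ℝ) / ((K : ℝ) * n * m)) with hγ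
  set δ : ℝ := σ2 * (((K : ℝ) * (u + v) + 1) / ((K : ℝ) * n) + ((K : ℝ) * u + 1) / ((K : ℝ) * m))
    with hδ
  have hMlam : ∀ lam : ℝ, M - lam • 1 = Matrix.fromBlocks
      (Matrix.of (fun _ _ => α) + (lam1 - lam) • (1 : Matrix (Fin n) (Fin n) ℝ))
      (Matrix.of (fun _ _ => γ))
      (Matrix.of (fun _ _ => γ))
      (Matrix.of (fun _ _ => δ) + (lam2 - lam) • (1 : Matrix (Fin m) (Fin m) ℝ)) := by
    intro lam
    rw [hM, hH11, hH12, hH22]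
    ext i j
    cases i <;> cases j <;>
      simp [Matrix.fromBlocks, Matrix.one_apply, Matrix.transpose_apply, hα, hγ, hδ,
        hlam1, hlam2, Matrix.sub_apply, smul_eq_mul] <;>
      split_ifs <;> ring
  have hprod : ∀ lam : ℝ, (lam3 - lam) * (lam4 - lam) =
      ((σ2 * (N : ℝ) / (2 * (K : ℝ) * n * m)) *
          ((K : ℝ) * m * v + (N : ℝ) * ((K : ℝ) * u + 1)) - lam) ^ 2 -
        (σ2 * (N : ℝ) / (2 * (K : ℝ) * n * m)) ^ 2 * s := by
    intro lam
    rw [hlam3, hlam4]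
    linear_combination (-((σ2 * (N : ℝ) / (2 * (K : ℝ) * n * m)) ^ 2)) * hw
  have key : ∀ lam : ℝ, lam ≠ lam1 → lam ≠ lam2 →
      (M - lam • 1).det =
        (lam1 - lam) ^ (n - 1) * (lam2 - lam) ^ (m - 1) * (lam3 - lam) * (lam4 - lam) := by
    intro lam h1 h2
    have hb : lam1 - lam ≠ 0 := sub_ne_zero.2 (Ne.symm h1)
    have he : lam2 - lam ≠ 0 := sub_ne_zero.2 (Ne.symm h2)
    rw [hMlam lam, aux_det (by omega) (by omega) α (lam1 - lam) γ δ (lam2 - lam) hb he]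
    have hfac : (lam1 - lam + n * α) * (lam2 - lam + m * δ) - (n * m : ℝ) * (γ * γ)
        = (lam3 - lam) * (lam4 - lam) := by
      rw [hprod lam, hα, hγ, hδ, hlam1, hlam2, hs, hN]
      push_cast
      field_simp
      ring
    rw [hfac]
    ring
  have hdense : Dense (({lam1}ᶜ : Set ℝ) ∩ ({lam2}ᶜ : Set ℝ)) :=
    (dense_compl_singleton lam1).inter_of_isOpen_right (dense_compl_singleton lam2)
      isOpen_compl_singleton
  have hc1 : Continuous fun lam : ℝ => (M - lam • 1).det :=
    Continuous.matrix_det (continuous_const.sub (continuous_id.smul continuous_const))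
  have hc2 : Continuous fun lam : ℝ =>
      (lam1 - lam) ^ (n - 1) * (lam2 - lam) ^ (m - 1) * (lam3 - lam) * (lam4 - lam) := by
    fun_prop
  have hfun := Continuous.ext_on hdense hc1 hc2 (fun lam hlam => by
    exact key lam hlam.1 hlam.2)
  exact fun lam => congrFun hfun lam
end

section
/- Let K be a positive integer, σ² > 0, u > 0, v > 0, and let n ≥ 1, m ≥ 1 be integers with N = n + m. Let M be the N×N block matrix with blocks H₁₁ = σ²(Ku+1)·( (N/(Knm))·𝟙_n𝟙_nᵀ + (v/(K(u+v)+1))·(I_n − (1/n)𝟙_n𝟙_nᵀ) ), H₁₂ = σ²(Ku+1)·(N/(Knm))·𝟙_n𝟙_mᵀ, H₂₂ = σ²·( ((K(u+v)+1)/(Kn) + (Ku+1)/(Km))·𝟙_m𝟙_mᵀ + v·I_m ), arranged as [[H₁₁, H₁₂],[H₁₂ᵀ, H₂₂]]. Then det(M) = σ^{2N} · v^{N−1} · (Ku+1)^n · (K(u+v)+1)^{1−n} · N²/(Knm). -/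
open Matrix

set_option maxHeartbeats 1000000 in
/-- The determinant of the mean squared error matrix of the BLUP of the individual
treatment effects in the two-group case:
`det(M) = σ^{2N} v^{N-1} (Ku+1)^n (K(u+v)+1)^{1-n} N²/(Knm)`. -/
theorem stmt_13 (K : ℕ) (hK : 1 ≤ K)
    (σ2 u v : ℝ) (hσ : 0 < σ2) (hu : 0 < u) (hv : 0 < v)
    (n m N : ℕ) (hn : 1 ≤ n) (hm : 1 ≤ m) (hN : N = n + m)
    (H11 : Matrix (Fin n) (Fin n) ℝ)
    (hH11 : H11 = (σ2 * ((K : ℝ) * u + 1)) •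
        (((N : ℝ) / ((K : ℝ) * (n : ℝ) * (m : ℝ))) • Matrix.of (fun _ _ => (1 : ℝ)) +
          (v / ((K : ℝ) * (u + v) + 1)) •
            ((1 : Matrix (Fin n) (Fin n) ℝ) - ((1 : ℝ) / (n : ℝ)) • Matrix.of (fun _ _ => (1 : ℝ)))))
    (H12 : Matrix (Fin n) (Fin m) ℝ)
    (hH12 : H12 = (σ2 * ((K : ℝ) * u + 1) * ((N : ℝ) / ((K : ℝ) * (n : ℝ) * (m : ℝ)))) •
        Matrix.of (fun _ _ => (1 : ℝ)))
    (H22 : Matrix (Fin m) (Fin m) ℝ)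
    (hH22 : H22 = σ2 •
        (((((K : ℝ) * (u + v) + 1) / ((K : ℝ) * (n : ℝ)) +
            ((K : ℝ) * u + 1) / ((K : ℝ) * (m : ℝ))) • Matrix.of (fun _ _ => (1 : ℝ))) +
          v • (1 : Matrix (Fin m) (Fin m) ℝ)))
    (M : Matrix (Fin n ⊕ Fin m) (Fin n ⊕ Fin m) ℝ)
    (hM : M = Matrix.fromBlocks H11 H12 H12ᵀ H22) :
    M.det = σ2 ^ N * v ^ (N - 1) * ((K : ℝ) * u + 1) ^ n *
        ((K : ℝ) * (u + v) + 1) ^ ((1 : ℤ) - (n : ℤ)) *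
        ((N : ℝ) ^ 2 / ((K : ℝ) * (n : ℝ) * (m : ℝ))) := by
  subst hN
  have hK0 : (0:ℝ) < (K:ℝ) := by exact_mod_cast hK
  have hn0 : (0:ℝ) < (n:ℝ) := by exact_mod_cast hn
  have hm0 : (0:ℝ) < (m:ℝ) := by exact_mod_cast hm
  set D : ℝ := (K : ℝ) * (u + v) + 1 with hDdef
  have hD0 : 0 < D := by rw [hDdef]; positivity
  set s : ℝ := σ2 * ((K : ℝ) * u + 1) with hsdef
  have hs0 : 0 < s := by rw [hsdef]; positivity
  set a : ℝ := s * (v / D) with hadef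
  set b : ℝ := s * ((↑(n + m) : ℝ) / ((K : ℝ) * (n : ℝ) * (m : ℝ)) - v / D / (n : ℝ)) with hbdef
  set c : ℝ := s * ((↑(n + m) : ℝ) / ((K : ℝ) * (n : ℝ) * (m : ℝ))) with hcdef
  set d : ℝ := σ2 * v with hddef
  set e : ℝ := σ2 * (D / ((K : ℝ) * (n : ℝ)) + ((K : ℝ) * u + 1) / ((K : ℝ) * (m : ℝ))) with hedef
  have ha0 : a ≠ 0 := by rw [hadef]; positivity
  have hd0 : d ≠ 0 := by rw [hddef]; positivity
  set U : Matrix (Fin n ⊕ Fin m) (Fin 2) ℝ :=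
    Matrix.of (fun i j => Sum.elim (fun _ => if j = 0 then (1:ℝ) else 0)
      (fun _ => if j = 0 then (0:ℝ) else 1) i) with hUdef
  set W : Matrix (Fin 2) (Fin 2) ℝ := !![b, c; c, e] with hWdef
  set A : Matrix (Fin n ⊕ Fin m) (Fin n ⊕ Fin m) ℝ :=
    fromBlocks (a • 1) 0 0 (d • 1) with hAdef
  set B : Matrix (Fin n ⊕ Fin m) (Fin n ⊕ Fin m) ℝ :=
    fromBlocks (a⁻¹ • 1) 0 0 (d⁻¹ • 1) with hBdef
  have hWU : W * Uᵀ = Matrix.of (fun p (j : Fin n ⊕ Fin m) =>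
      Sum.elim (fun _ => (W p 0 : ℝ)) (fun _ => W p 1) j) := by
    ext p j
    rcases j with j | j <;>
      · simp only [Matrix.mul_apply]
        simp [Fin.sum_univ_two, hUdef]
  have hUWU : U * (W * Uᵀ) = Matrix.of (fun i (j : Fin n ⊕ Fin m) =>
      Sum.elim (fun _ => Sum.elim (fun _ => b) (fun _ => c) j)
        (fun _ => Sum.elim (fun _ => c) (fun _ => e) j) i) := by
    rw [hWU]
    ext i j
    rcases i with i | i <;> rcases j with j | j <;>
      · simp only [Matrix.mul_apply]
        simp [Fin.sum_univ_two, hUdef, hWdef]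
  have key : M = A + U * (W * Uᵀ) := by
    rw [hM, hH11, hH12, hH22, hUWU, hAdef]
    ext i j
    rcases i with i | i <;> rcases j with j | j <;>
      simp [Matrix.fromBlocks, Matrix.one_apply,
        hadef, hbdef, hcdef, hddef, hedef] <;>
      first
        | (split_ifs <;> ring)
        | ring
  have hAB : A * B = 1 := by
    rw [hAdef, hBdef, fromBlocks_multiply]
    simp [Matrix.smul_mul, Matrix.mul_smul, smul_smul, mul_inv_cancel₀ ha0,
      mul_inv_cancel₀ hd0, inv_mul_cancel₀ ha0, inv_mul_cancel₀ hd0, ← fromBlocks_one]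
  have hBA : B * A = 1 := by
    rw [hAdef, hBdef, fromBlocks_multiply]
    simp [Matrix.smul_mul, Matrix.mul_smul, smul_smul, mul_inv_cancel₀ ha0,
      mul_inv_cancel₀ hd0, inv_mul_cancel₀ ha0, inv_mul_cancel₀ hd0, ← fromBlocks_one]
  have hdetA : A.det = a ^ n * d ^ m := by
    rw [hAdef, det_fromBlocks_zero₂₁]
    simp [det_smul]
  have h2 : B * M = 1 + (B * U) * (W * Uᵀ) := by
    rw [key, Matrix.mul_add, hBA, Matrix.mul_assoc]
  have h3 : (1 + (B * U) * (W * Uᵀ)).det = (1 + (W * Uᵀ) * (B * U)).det :=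
    Matrix.det_one_add_mul_comm _ _
  have h4 : M = A * (1 + (B * U) * (W * Uᵀ)) := by
    rw [← h2, ← Matrix.mul_assoc, hAB, Matrix.one_mul]
  have h1 : M.det = A.det * (1 + (W * Uᵀ) * (B * U)).det := by
    rw [h4, det_mul, h3]
  have hBU : B * U = Matrix.of (fun (i : Fin n ⊕ Fin m) (q : Fin 2) =>
      Sum.elim (fun _ => if q = 0 then a⁻¹ else 0) (fun _ => if q = 0 then 0 else d⁻¹) i) := by
    ext i q
    rcases i with i | i <;>
      · simp only [Matrix.mul_apply]
        simp [Fintype.sum_sum_type, hBdef, hUdef, Matrix.fromBlocks,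
          Matrix.one_apply, ite_mul, mul_ite, Finset.sum_ite_eq,
          Finset.mem_univ]
  have hG : (W * Uᵀ) * (B * U) =
      !![b * ((n:ℝ) * a⁻¹), c * ((m:ℝ) * d⁻¹); c * ((n:ℝ) * a⁻¹), e * ((m:ℝ) * d⁻¹)] := by
    rw [hWU, hBU]
    ext p q
    fin_cases p <;> fin_cases q <;>
      · simp only [Matrix.mul_apply]
        simp [Fintype.sum_sum_type, hWdef, Finset.sum_const,
          Finset.card_univ, nsmul_eq_mul]
        ring
  have hdet2 : (1 + (W * Uᵀ) * (B * U)).det =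
      (1 + b * ((n:ℝ) * a⁻¹)) * (1 + e * ((m:ℝ) * d⁻¹)) -
        (c * ((m:ℝ) * d⁻¹)) * (c * ((n:ℝ) * a⁻¹)) := by
    rw [hG, Matrix.det_fin_two]
    simp [Matrix.add_apply, Matrix.one_apply]
  have hE : (1 + b * ((n:ℝ) * a⁻¹)) * (1 + e * ((m:ℝ) * d⁻¹)) -
      (c * ((m:ℝ) * d⁻¹)) * (c * ((n:ℝ) * a⁻¹)) =
      D * (↑(n + m) : ℝ) ^ 2 / ((K : ℝ) * (n : ℝ) * (m : ℝ) * v) := by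
    rw [hadef, hbdef, hcdef, hddef, hedef, hsdef, hDdef]
    push_cast
    field_simp
    ring
  have hzp : D ^ ((1:ℤ) - (n:ℤ)) = D / D ^ n := by
    rw [zpow_sub₀ (ne_of_gt hD0), zpow_one, zpow_natCast]
  have hvp : v ^ (n + m - 1) = v ^ n * v ^ m / v := by
    rw [eq_div_iff (ne_of_gt hv), ← pow_succ, ← pow_add]
    congr 1
    omega
  rw [h1, hdetA, hdet2, hE, hzp, hvp, hadef, hddef, hsdef, pow_add σ2, mul_pow, mul_pow,
    div_pow]
  push_cast
  field_simp
  ring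
end

section
/- Let K be a positive integer, u > 0, v > 0 and N > 0 real, and set t = ln( (Ku+1)/(K(u+v)+1) ) (note t < 0). Define D_Ψ(w) = N·w·t − ln( w(1−w) ) for w ∈ (0,1). Then D_Ψ is strictly convex on (0,1) and the point w* = 1/(Nt) + 1/2 + √( 1/(N²t²) + 1/4 ) lies in (0,1) and is the unique minimizer of D_Ψ on (0,1). -/
/-- The D-criterion for prediction in the two-group case,
`D_Ψ(w) = Nwt - ln(w(1-w))` with `t = ln((Ku+1)/(K(u+v)+1)) < 0`, is strictly convex
on `(0,1)` and `w* = 1/(Nt) + 1/2 + √(1/(N²t²) + 1/4)` lies in `(0,1)` and is its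
unique minimizer there. -/
theorem stmt_14 (K : ℕ) (hK : 1 ≤ K)
    (u v N : ℝ) (hu : 0 < u) (hv : 0 < v) (hN : 0 < N)
    (t : ℝ) (ht : t = Real.log (((K : ℝ) * u + 1) / ((K : ℝ) * (u + v) + 1)))
    (D : ℝ → ℝ) (hD : ∀ w : ℝ, D w = N * w * t - Real.log (w * (1 - w)))
    (wstar : ℝ)
    (hw : wstar = 1 / (N * t) + 1 / 2 + Real.sqrt (1 / (N ^ 2 * t ^ 2) + 1 / 4)) :
    t < 0 ∧
    StrictConvexOn ℝ (Set.Ioo (0 : ℝ) 1) D ∧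
    wstar ∈ Set.Ioo (0 : ℝ) 1 ∧
      ∀ w ∈ Set.Ioo (0 : ℝ) 1, w ≠ wstar → D wstar < D w := by
  have hK1 : (1:ℝ) ≤ (K:ℝ) := by exact_mod_cast hK
  have hKpos : (0:ℝ) < K := by linarith
  have ht0 : t < 0 := by
    have h1 : (0:ℝ) < (K:ℝ)*u+1 := by positivity
    have h2 : (K:ℝ)*u+1 < (K:ℝ)*(u+v)+1 := by nlinarith [mul_pos hKpos hv]
    rw [ht]
    exact Real.log_neg (by positivity) ((div_lt_one (by linarith)).mpr h2)
  set c : ℝ := N * t with hc'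
  have hc : c < 0 := mul_neg_of_pos_of_neg hN ht0
  have hcne : c ≠ 0 := ne_of_lt hc
  set a : ℝ := 1 / c with ha'
  have ha : a < 0 := div_neg_of_pos_of_neg one_pos hc
  set s : ℝ := Real.sqrt (a^2 + 1/4) with hs'
  have hw' : wstar = a + 1/2 + s := by
    rw [hw, hs', ha', hc']
    congr 2
    congr 1
    rw [div_pow, one_pow]
    ring_nf
  have hs2 : s^2 = a^2 + 1/4 := Real.sq_sqrt (by positivity)
  have hs_gt : -a < s := (Real.lt_sqrt (by linarith)).mpr (by nlinarith)
  have hs_lt : s < 1/2 - a := (Real.sqrt_lt' (by linarith)).mpr (by nlinarith)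
  have hwmem : wstar ∈ Set.Ioo (0:ℝ) 1 := by
    constructor <;> [skip; skip] <;> rw [hw'] <;> linarith
  have hca : c * a = 1 := by
    rw [ha']; field_simp
  -- quadratic identity
  have hq : c * wstar^2 - (c+2)*wstar + 1 = 0 := by
    rw [hw']
    linear_combination c * hs2 + (2*a + 2*s - 1) * hca + hca
  -- derivative
  have hderiv : ∀ x ∈ Set.Ioo (0:ℝ) 1, HasDerivAt D (c - (1 - 2*x)/(x*(1-x))) x := by
    intro x hx
    have hx0 : x ≠ 0 := ne_of_gt hx.1
    have hx1 : (1:ℝ) - x ≠ 0 := by have := hx.2; intro h; linarith [h]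
    have hprod : x * (1-x) ≠ 0 := mul_ne_zero hx0 hx1
    have hp : HasDerivAt (fun w : ℝ => w*(1-w)) (1-2*x) x := by
      have h := (hasDerivAt_id x).mul ((hasDerivAt_const x (1:ℝ)).sub (hasDerivAt_id x))
      refine h.congr_deriv ?_
      simp; ring
    have hlog : HasDerivAt (fun w : ℝ => Real.log (w*(1-w))) ((1-2*x)/(x*(1-x))) x :=
      hp.log hprod
    have hlin : HasDerivAt (fun w : ℝ => N*w*t) c x := by
      have h := ((hasDerivAt_id x).const_mul N).mul_const t
      refine h.congr_deriv ?_
      rw [hc']; ring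
    have hDfun : D = fun w => N*w*t - Real.log (w*(1-w)) := funext hD
    rw [hDfun]
    exact hlin.sub hlog
  -- strict monotonicity of the derivative formula
  have hmono : ∀ x ∈ Set.Ioo (0:ℝ) 1, ∀ y ∈ Set.Ioo (0:ℝ) 1, x < y →
      c - (1 - 2*x)/(x*(1-x)) < c - (1 - 2*y)/(y*(1-y)) := by
    intro x hx y hy hxy
    have hx1 : 0 < 1 - x := by linarith [hx.2]
    have hy1 : 0 < 1 - y := by linarith [hy.2]
    have hkey : (1-2*y)/(y*(1-y)) < (1-2*x)/(x*(1-x)) := by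
      rw [div_lt_div_iff₀ (mul_pos hy.1 hy1) (mul_pos hx.1 hx1)]
      nlinarith [mul_pos (sub_pos.mpr hxy) (mul_pos hx1 hy1),
        mul_pos (sub_pos.mpr hxy) (mul_pos hx.1 hy.1)]
    linarith
  have hconvex : StrictConvexOn ℝ (Set.Ioo (0:ℝ) 1) D := by
    apply StrictMonoOn.strictConvexOn_of_deriv (convex_Ioo 0 1)
    · exact fun x hx => (hderiv x hx).continuousAt.continuousWithinAt
    · rw [interior_Ioo]
      intro x hx y hy hxy
      rw [(hderiv x hx).deriv, (hderiv y hy).deriv]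
      exact hmono x hx y hy hxy
  -- derivative vanishes at wstar
  have hwne : wstar * (1 - wstar) ≠ 0 :=
    mul_ne_zero (ne_of_gt hwmem.1) (by have := hwmem.2; intro h; linarith)
  have hφ0 : c - (1 - 2*wstar)/(wstar*(1-wstar)) = 0 := by
    have h1 : (1 - 2*wstar) = c * (wstar*(1-wstar)) := by linear_combination hq
    rw [h1, mul_div_assoc, div_self hwne, mul_one, sub_self]
  refine ⟨ht0, hconvex, hwmem, ?_⟩
  intro w hwmem' hne
  have hsub : ∀ p q : ℝ, 0 < p → q < 1 → Set.Icc p q ⊆ Set.Ioo (0:ℝ) 1 := by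
    intro p q hp hq x hx
    exact ⟨lt_of_lt_of_le hp hx.1, lt_of_le_of_lt hx.2 hq⟩
  rcases lt_or_gt_of_ne hne with hlt | hgt
  · -- w < wstar : D strictly decreasing on [w, wstar]
    have hss : Set.Icc w wstar ⊆ Set.Ioo (0:ℝ) 1 := hsub w wstar hwmem'.1 hwmem.2
    have hanti : StrictAntiOn D (Set.Icc w wstar) := by
      apply strictAntiOn_of_deriv_neg (convex_Icc w wstar)
      · exact fun x hx => (hderiv x (hss hx)).continuousAt.continuousWithinAt
      · rw [interior_Icc]
        intro x hx
        have hxm : x ∈ Set.Ioo (0:ℝ) 1 := hss ⟨le_of_lt hx.1, le_of_lt hx.2⟩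
        rw [(hderiv x hxm).deriv]
        have := hmono x hxm wstar hwmem hx.2
        linarith [hφ0]
    exact hanti (Set.left_mem_Icc.mpr (le_of_lt hlt)) (Set.right_mem_Icc.mpr (le_of_lt hlt)) hlt
  · -- wstar < w : D strictly increasing on [wstar, w]
    have hss : Set.Icc wstar w ⊆ Set.Ioo (0:ℝ) 1 := hsub wstar w hwmem.1 hwmem'.2
    have hmonoD : StrictMonoOn D (Set.Icc wstar w) := by
      apply strictMonoOn_of_deriv_pos (convex_Icc wstar w)
      · exact fun x hx => (hderiv x (hss hx)).continuousAt.continuousWithinAt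
      · rw [interior_Icc]
        intro x hx
        have hxm : x ∈ Set.Ioo (0:ℝ) 1 := hss ⟨le_of_lt hx.1, le_of_lt hx.2⟩
        rw [(hderiv x hxm).deriv]
        have := hmono wstar hwmem x hxm hx.1
        linarith [hφ0]
    exact hmonoD (Set.left_mem_Icc.mpr (le_of_lt hgt)) (Set.right_mem_Icc.mpr (le_of_lt hgt)) hgt
end

section
/- Let K be a positive integer, σ² > 0, u > 0, v > 0, and let n ≥ 1, m ≥ 1 be integers with N = n + m, and set w = n/N. Let M be the N×N block matrix with blocks H₁₁ = σ²(Ku+1)·( (N/(Knm))·𝟙_n𝟙_nᵀ + (v/(K(u+v)+1))·(I_n − (1/n)𝟙_n𝟙_nᵀ) ), H₁₂ = σ²(Ku+1)·(N/(Knm))·𝟙_n𝟙_mᵀ, H₂₂ = σ²·( ((K(u+v)+1)/(Kn) + (Ku+1)/(Km))·𝟙_m𝟙_mᵀ + v·I_m ), arranged as [[H₁₁, H₁₂],[H₁₂ᵀ, H₂₂]]. Then the largest eigenvalue of the symmetric matrix M equals λ₃ = (σ²/2)·( v/w + (Ku+1)/(Kw(1−w)) + √(s_w)/(Kw(1−w))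 ), where s_w = K²(1−w)²v² + 2K(1−w)(1−2w)(Ku+1)v + (Ku+1)²; that is, λ₃ is an eigenvalue of M and every eigenvalue of M is at most λ₃. -/
open Matrix
set_option maxHeartbeats 1000000

lemma ones_mulVec {a b : ℕ} (p : Fin b → ℝ) (i : Fin a) :
    ((Matrix.of fun _ _ => (1:ℝ)) *ᵥ p) i = ∑ j, p j := by
  simp [Matrix.mulVec, dotProduct]

lemma ones_transpose {a b : ℕ} :
    (Matrix.of fun _ _ => (1:ℝ) : Matrix (Fin a) (Fin b) ℝ)ᵀ = Matrix.of fun _ _ => (1:ℝ) := rfl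


/-- The largest eigenvalue of the mean squared error matrix of the BLUP of the
individual treatment effects in the two-group case equals `λ₃` (with `w = n/N`):
`λ₃` is an eigenvalue and every eigenvalue is at most `λ₃`. -/
theorem stmt_15 (K : ℕ) (hK : 1 ≤ K)
    (σ2 u v : ℝ) (hσ : 0 < σ2) (hu : 0 < u) (hv : 0 < v)
    (n m N : ℕ) (hn : 1 ≤ n) (hm : 1 ≤ m) (hN : N = n + m)
    (w : ℝ) (hw : w = (n : ℝ) / (N : ℝ))
    (H11 : Matrix (Fin n) (Fin n) ℝ)
    (hH11 : H11 = (σ2 * ((K : ℝ) * u + 1)) •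
        (((N : ℝ) / ((K : ℝ) * (n : ℝ) * (m : ℝ))) • Matrix.of (fun _ _ => (1 : ℝ)) +
          (v / ((K : ℝ) * (u + v) + 1)) •
            ((1 : Matrix (Fin n) (Fin n) ℝ) - ((1 : ℝ) / (n : ℝ)) • Matrix.of (fun _ _ => (1 : ℝ)))))
    (H12 : Matrix (Fin n) (Fin m) ℝ)
    (hH12 : H12 = (σ2 * ((K : ℝ) * u + 1) * ((N : ℝ) / ((K : ℝ) * (n : ℝ) * (m : ℝ)))) •
        Matrix.of (fun _ _ => (1 : ℝ)))
    (H22 : Matrix (Fin m) (Fin m) ℝ)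
    (hH22 : H22 = σ2 •
        (((((K : ℝ) * (u + v) + 1) / ((K : ℝ) * (n : ℝ)) +
            ((K : ℝ) * u + 1) / ((K : ℝ) * (m : ℝ))) • Matrix.of (fun _ _ => (1 : ℝ))) +
          v • (1 : Matrix (Fin m) (Fin m) ℝ)))
    (M : Matrix (Fin n ⊕ Fin m) (Fin n ⊕ Fin m) ℝ)
    (hM : M = Matrix.fromBlocks H11 H12 H12ᵀ H22)
    (sw lam3 : ℝ)
    (hsw : sw = (K : ℝ) ^ 2 * (1 - w) ^ 2 * v ^ 2 +
        2 * (K : ℝ) * (1 - w) * (1 - 2 * w) * ((K : ℝ) * u + 1) * v +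
        ((K : ℝ) * u + 1) ^ 2)
    (hlam3 : lam3 = (σ2 / 2) * (v / w + ((K : ℝ) * u + 1) / ((K : ℝ) * w * (1 - w)) +
        Real.sqrt sw / ((K : ℝ) * w * (1 - w)))) :
    (∃ x : Fin n ⊕ Fin m → ℝ, x ≠ 0 ∧ M *ᵥ x = lam3 • x) ∧
      ∀ (μ : ℝ) (x : Fin n ⊕ Fin m → ℝ), x ≠ 0 → M *ᵥ x = μ • x → μ ≤ lam3 := by
  -- basic positivity facts
  have hK1 : (1:ℝ) ≤ (K:ℝ) := by exact_mod_cast hK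
  have hK0 : (0:ℝ) < (K:ℝ) := by linarith
  have hn0 : (0:ℝ) < (n:ℝ) := by exact_mod_cast Nat.cast_pos.mpr hn
  have hm0 : (0:ℝ) < (m:ℝ) := by exact_mod_cast Nat.cast_pos.mpr hm
  have hNr : (N:ℝ) = (n:ℝ) + (m:ℝ) := by rw [hN]; push_cast; ring
  have hN0 : (0:ℝ) < (N:ℝ) := by rw [hNr]; linarith
  have hKu : (0:ℝ) < (K:ℝ) * u + 1 := by nlinarith
  have hKuv : (0:ℝ) < (K:ℝ) * (u + v) + 1 := by nlinarith
  have hw0 : 0 < w := by rw [hw]; positivity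
  have hw1 : w < 1 := by
    rw [hw, div_lt_one hN0, hNr]; linarith
  have h1w : 1 - w = (m:ℝ) / (N:ℝ) := by
    rw [hw]; field_simp; rw [hNr]; ring
  have hKw : (0:ℝ) < (K:ℝ) * w * (1 - w) := by
    apply mul_pos (mul_pos hK0 hw0); linarith
  -- abbreviations
  set R := Real.sqrt sw with hR
  set A := σ2 * ((K:ℝ) * u + 1) * ((N:ℝ) / ((K:ℝ) * (n:ℝ) * (m:ℝ))) with hA
  set B := σ2 * (((K:ℝ) * (u + v) + 1) / ((K:ℝ) * (n:ℝ)) +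
      ((K:ℝ) * u + 1) / ((K:ℝ) * (m:ℝ))) with hB
  set lam1 := σ2 * ((K:ℝ) * u + 1) * v / ((K:ℝ) * (u + v) + 1) with hlam1
  have hA0 : 0 < A := by
    rw [hA]; apply mul_pos (mul_pos hσ hKu); apply div_pos hN0
    positivity
  have hsw0 : 0 ≤ sw := by
    rw [hsw]
    nlinarith [sq_nonneg ((K:ℝ)*(1-w)*v + (1-2*w)*((K:ℝ)*u+1)),
      mul_nonneg (mul_nonneg hw0.le (by linarith : (0:ℝ) ≤ 1 - w)) (sq_nonneg ((K:ℝ)*u+1))]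
  have hR0 : 0 ≤ R := Real.sqrt_nonneg _
  have hR2 : R ^ 2 = sw := Real.sq_sqrt hsw0
  -- the trace identity
  have hTr : A * (n:ℝ) + (B * (m:ℝ) + σ2 * v) = 2 * lam3 - σ2 * R / ((K:ℝ) * w * (1 - w)) := by
    rw [hA, hB, hlam3, hw, hNr]
    field_simp [hn0.ne', hm0.ne', hK0.ne']
    ring
  -- the discriminant identity
  have hDisc : (A * (n:ℝ) + (B * (m:ℝ) + σ2 * v))^2
      - 4 * (A * (n:ℝ) * (B * (m:ℝ) + σ2 * v) - A * (n:ℝ) * (A * (m:ℝ)))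
      = (σ2 * R / ((K:ℝ) * w * (1 - w)))^2 := by
    have h2 : (σ2 * R / ((K:ℝ) * w * (1 - w)))^2
        = σ2^2 * sw / ((K:ℝ) * w * (1 - w))^2 := by
      rw [div_pow, mul_pow, hR2]
    rw [h2, hsw, hA, hB, hw, hNr]
    field_simp [hn0.ne', hm0.ne', hK0.ne']
    ring
  -- lam3 satisfies the quadratic
  have hquad3 : lam3^2 - (A * (n:ℝ) + (B * (m:ℝ) + σ2 * v)) * lam3
      + (A * (n:ℝ) * (B * (m:ℝ) + σ2 * v) - A * (n:ℝ) * (A * (m:ℝ))) = 0 := by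
    have hl : lam3 = (A * (n:ℝ) + (B * (m:ℝ) + σ2 * v)) / 2
        + (σ2 * R / ((K:ℝ) * w * (1 - w))) / 2 := by linarith only [hTr]
    rw [hl]; linear_combination (-1/4 : ℝ) * hDisc
  -- any root of the quadratic is ≤ lam3
  have hUB : ∀ μ : ℝ, μ^2 - (A * (n:ℝ) + (B * (m:ℝ) + σ2 * v)) * μ
      + (A * (n:ℝ) * (B * (m:ℝ) + σ2 * v) - A * (n:ℝ) * (A * (m:ℝ))) = 0 → μ ≤ lam3 := by
    intro μ hμ
    have hC : 0 ≤ σ2 * R / ((K:ℝ) * w * (1 - w)) :=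
      div_nonneg (mul_nonneg hσ.le hR0) hKw.le
    have key : (2 * μ - (A * (n:ℝ) + (B * (m:ℝ) + σ2 * v)))^2
        = (σ2 * R / ((K:ℝ) * w * (1 - w)))^2 := by
      linear_combination 4 * hμ + hDisc
    rw [hTr] at key
    have expand : (2*(μ - lam3)) * (2*(μ - lam3) + 2*(σ2 * R / ((K:ℝ) * w * (1 - w)))) = 0 := by
      linear_combination key
    rcases mul_eq_zero.mp expand with h | h
    · linarith only [h]
    · linarith only [h, hC]
  -- lam1 ≤ lam2 ≤ lam3
  have hsqrt_lb : (K:ℝ) * (1 - w) * v + (1 - 2*w) * ((K:ℝ) * u + 1) ≤ R := by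
    rcases le_or_gt ((K:ℝ) * (1 - w) * v + (1 - 2*w) * ((K:ℝ) * u + 1)) 0 with h | h
    · linarith only [h, hR0]
    · rw [hR, ← Real.sqrt_sq h.le]
      apply Real.sqrt_le_sqrt
      rw [hsw]
      have h4 : 0 ≤ 4*w*(1-w)*((K:ℝ)*u+1)^2 :=
        mul_nonneg (mul_nonneg (by linarith only [hw0] : (0:ℝ) ≤ 4*w)
          (by linarith only [hw1] : (0:ℝ) ≤ 1 - w)) (sq_nonneg _)
      have heq : ((K:ℝ) ^ 2 * (1 - w) ^ 2 * v ^ 2 +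
          2 * (K:ℝ) * (1 - w) * (1 - 2 * w) * ((K:ℝ) * u + 1) * v + ((K:ℝ) * u + 1) ^ 2)
          - ((K:ℝ) * (1 - w) * v + (1 - 2*w) * ((K:ℝ) * u + 1))^2
          = 4*w*(1-w)*((K:ℝ)*u+1)^2 := by ring
      linarith only [h4, heq]
  have hlam23 : σ2 * v ≤ lam3 := by
    have hstep : (σ2/2) * (v / w + ((K:ℝ)*u+1) / ((K:ℝ)*w*(1-w))
        + ((K:ℝ) * (1 - w) * v + (1 - 2*w) * ((K:ℝ) * u + 1)) / ((K:ℝ)*w*(1-w)))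
        = σ2 * v / w + σ2 * ((K:ℝ)*u+1) / ((K:ℝ)*w) := by
      field_simp [sub_ne_zero.mpr hw1.ne']
      ring
    have hmono : (σ2/2) * (v / w + ((K:ℝ)*u+1) / ((K:ℝ)*w*(1-w))
        + ((K:ℝ) * (1 - w) * v + (1 - 2*w) * ((K:ℝ) * u + 1)) / ((K:ℝ)*w*(1-w))) ≤ lam3 := by
      have hd : lam3 - (σ2/2) * (v / w + ((K:ℝ)*u+1) / ((K:ℝ)*w*(1-w))
          + ((K:ℝ) * (1 - w) * v + (1 - 2*w) * ((K:ℝ) * u + 1)) / ((K:ℝ)*w*(1-w)))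
          = (σ2/2) * ((R - ((K:ℝ) * (1 - w) * v + (1 - 2*w) * ((K:ℝ) * u + 1))) / ((K:ℝ)*w*(1-w))) := by
        rw [hlam3]; ring
      have h3 : 0 ≤ (R - ((K:ℝ) * (1 - w) * v + (1 - 2*w) * ((K:ℝ) * u + 1))) / ((K:ℝ)*w*(1-w)) :=
        div_nonneg (by linarith only [hsqrt_lb]) hKw.le
      have h5 : 0 ≤ (σ2/2) * ((R - ((K:ℝ) * (1 - w) * v + (1 - 2*w) * ((K:ℝ) * u + 1))) / ((K:ℝ)*w*(1-w))) :=
        mul_nonneg (by linarith only [hσ]) h3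
      linarith only [hd, h5]
    have h4 : σ2 * v ≤ σ2 * v / w := by
      rw [le_div_iff₀ hw0]
      have h6 : 0 ≤ σ2*v*(1-w) := mul_nonneg (mul_pos hσ hv).le (by linarith only [hw1])
      have h7 : σ2 * v - σ2 * v * w = σ2*v*(1-w) := by ring
      linarith only [h6, h7]
    have h5 : 0 ≤ σ2 * ((K:ℝ)*u+1) / ((K:ℝ)*w) :=
      div_nonneg (mul_nonneg hσ.le hKu.le) (mul_pos hK0 hw0).le
    linarith only [hstep, hmono, h4, h5]
  have hlam12 : lam1 ≤ σ2 * v := by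
    rw [hlam1, div_le_iff₀ hKuv]
    have h8 : 0 ≤ σ2 * (K:ℝ) * v^2 := by positivity
    have h9 : σ2 * v * ((K:ℝ) * (u + v) + 1) - σ2 * ((K:ℝ) * u + 1) * v = σ2 * (K:ℝ) * v^2 := by ring
    linarith only [h8, h9]
  -- row computation lemmas
  have hb1 : ∀ (p : Fin n → ℝ) (q : Fin m → ℝ) (i : Fin n),
      (M *ᵥ Sum.elim p q) (Sum.inl i) =
        σ2 * ((K:ℝ)*u+1) * (((N:ℝ)/((K:ℝ)*(n:ℝ)*(m:ℝ))) * (∑ k, p k)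
          + (v/((K:ℝ)*(u+v)+1)) * (p i - (1/(n:ℝ)) * ∑ k, p k))
        + A * (∑ k, q k) := by
    intro p q i
    rw [hM, Matrix.fromBlocks_mulVec, Sum.elim_inl, hH11, hH12, hA]
    simp only [Matrix.add_mulVec, Matrix.sub_mulVec, Matrix.smul_mulVec,
      Matrix.one_mulVec, Pi.add_apply, Pi.sub_apply, Pi.smul_apply, smul_eq_mul,
      Sum.elim_comp_inl, Sum.elim_comp_inr, ones_mulVec]
  have hb2 : ∀ (p : Fin n → ℝ) (q : Fin m → ℝ) (j : Fin m),
      (M *ᵥ Sum.elim p q) (Sum.inr j) =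
        A * (∑ k, p k) + B * (∑ k, q k) + σ2 * v * q j := by
    intro p q j
    rw [hM, Matrix.fromBlocks_mulVec, Sum.elim_inr, hH12, hH22, hA, hB]
    simp only [Matrix.transpose_smul, ones_transpose, Matrix.add_mulVec,
      Matrix.smul_mulVec, Matrix.one_mulVec, Pi.add_apply, Pi.smul_apply,
      smul_eq_mul, Sum.elim_comp_inl, Sum.elim_comp_inr, ones_mulVec]
    ring
  have i0 : Fin n := ⟨0, hn⟩
  constructor
  · -- existence of eigenvector for lam3
    refine ⟨Sum.elim (fun _ => A * (m:ℝ)) (fun _ => lam3 - A * (n:ℝ)), ?_, ?_⟩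
    · intro h
      have h0 : A * (m:ℝ) = 0 := congrFun h (Sum.inl i0)
      linarith only [h0, mul_pos hA0 hm0]
    · funext k
      cases k with
      | inl i =>
        rw [hb1]
        simp only [Sum.elim_inl, Pi.smul_apply, smul_eq_mul, Finset.sum_const,
          Finset.card_univ, Fintype.card_fin, nsmul_eq_mul]
        rw [hA]
        field_simp
        ring
      | inr j =>
        rw [hb2]
        simp only [Sum.elim_inr, Pi.smul_apply, smul_eq_mul, Finset.sum_const,
          Finset.card_univ, Fintype.card_fin, nsmul_eq_mul]
        linear_combination -hquad3
  · -- upper bound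
    intro μ x hx hMx
    set p : Fin n → ℝ := fun i => x (Sum.inl i) with hp
    set q : Fin m → ℝ := fun j => x (Sum.inr j) with hq
    have hxe : x = Sum.elim p q := by funext k; cases k <;> rfl
    set P := ∑ i, p i with hP
    set Q := ∑ j, q j with hQ
    have r1 : ∀ i, σ2 * ((K:ℝ)*u+1) * (((N:ℝ)/((K:ℝ)*(n:ℝ)*(m:ℝ))) * P
        + (v/((K:ℝ)*(u+v)+1)) * (p i - (1/(n:ℝ)) * P)) + A * Q = μ * p i := by
      intro i
      have h := congrFun hMx (Sum.inl i)
      rw [hxe] at h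
      rw [hb1 p q i] at h
      simpa using h
    have r2 : ∀ j, A * P + B * Q + σ2 * v * q j = μ * q j := by
      intro j
      have h := congrFun hMx (Sum.inr j)
      rw [hxe] at h
      rw [hb2 p q j] at h
      simpa using h
    have r1' : ∀ i, (μ - lam1) * p i = A * P + A * Q - lam1 * ((1/(n:ℝ)) * P) := by
      intro i
      have h := r1 i
      rw [hlam1, hA]
      rw [hA] at h
      linear_combination -h
    by_cases hμ1 : μ = lam1
    · rw [hμ1]; linarith only [hlam12, hlam23]
    by_cases hμ2 : μ = σ2 * v
    · rw [hμ2]; linarith only [hlam23]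
    · -- p and q are constant
      have hμ1' : μ - lam1 ≠ 0 := sub_ne_zero.mpr hμ1
      have hμ2' : μ - σ2 * v ≠ 0 := sub_ne_zero.mpr hμ2
      set α := (A * P + A * Q - lam1 * ((1/(n:ℝ)) * P)) / (μ - lam1) with hα
      set β := (A * P + B * Q) / (μ - σ2 * v) with hβ
      have hpc : ∀ i, p i = α := by
        intro i
        rw [hα, eq_div_iff hμ1']
        linear_combination r1' i
      have hqc : ∀ j, q j = β := by
        intro j
        rw [hβ, eq_div_iff hμ2']
        linear_combination -(r2 j)
      have hPα : P = (n:ℝ) * α := by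
        rw [hP]
        rw [Finset.sum_congr rfl (fun i _ => hpc i)]
        simp [Finset.sum_const, Finset.card_univ, mul_comm]
      have hQβ : Q = (m:ℝ) * β := by
        rw [hQ]
        rw [Finset.sum_congr rfl (fun j _ => hqc j)]
        simp [Finset.sum_const, Finset.card_univ, mul_comm]
      have hninv : (1/(n:ℝ)) * ((n:ℝ) * α) = α := by field_simp
      have e1 : μ * α = A * (n:ℝ) * α + A * (m:ℝ) * β := by
        have h := r1' i0
        rw [hpc i0, hPα, hQβ, hninv] at h
        linear_combination h
      have e2 : μ * β = A * (n:ℝ) * α + (B * (m:ℝ) + σ2 * v) * β := by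
        have h := r2 ⟨0, hm⟩
        rw [hqc ⟨0, hm⟩, hPα, hQβ] at h
        linear_combination -h
      have hor : α ≠ 0 ∨ β ≠ 0 := by
        by_contra hcon
        push_neg at hcon
        apply hx
        funext k
        cases k with
        | inl i => show p i = 0; rw [hpc i, hcon.1]
        | inr j => show q j = 0; rw [hqc j, hcon.2]
      have hAn0 : A * (n:ℝ) ≠ 0 := (mul_pos hA0 hn0).ne'
      have hAm0 : A * (m:ℝ) ≠ 0 := (mul_pos hA0 hm0).ne'
      have hβ0 : β ≠ 0 := by
        intro h0
        have hα0 : α = 0 := by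
          have h1 := e2
          rw [h0] at h1
          have : A * (n:ℝ) * α = 0 := by linear_combination -h1
          exact (mul_eq_zero.mp this).elim (fun h => absurd h hAn0) id
        rcases hor with h | h
        · exact h hα0
        · exact h h0
      have hα0 : α ≠ 0 := by
        intro h0
        have hβ0' : β = 0 := by
          have h1 := e1
          rw [h0] at h1
          have : A * (m:ℝ) * β = 0 := by linear_combination -h1
          exact (mul_eq_zero.mp this).elim (fun h => absurd h hAm0) id
        exact hβ0 hβ0'
      have hcp : μ^2 - (A * (n:ℝ) + (B * (m:ℝ) + σ2 * v)) * μ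
          + (A * (n:ℝ) * (B * (m:ℝ) + σ2 * v) - A * (n:ℝ) * (A * (m:ℝ))) = 0 := by
        have hmul : ((μ - A * (n:ℝ)) * α) * ((μ - (B * (m:ℝ) + σ2 * v)) * β)
            = (A * (m:ℝ) * β) * (A * (n:ℝ) * α) := by
          have f1 : (μ - A * (n:ℝ)) * α = A * (m:ℝ) * β := by linear_combination e1
          have f2 : (μ - (B * (m:ℝ) + σ2 * v)) * β = A * (n:ℝ) * α := by linear_combination e2
          rw [f1, f2]
        have hz : (μ^2 - (A * (n:ℝ) + (B * (m:ℝ) + σ2 * v)) * μ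
            + (A * (n:ℝ) * (B * (m:ℝ) + σ2 * v) - A * (n:ℝ) * (A * (m:ℝ)))) * (α * β) = 0 := by
          linear_combination hmul
        rcases mul_eq_zero.mp hz with h | h
        · exact h
        · exact absurd h (mul_ne_zero hα0 hβ0)
      exact hUB μ hcp
end

section
/- Let K be a positive integer, σ² > 0, u > 0 and v > 0 real. Define E_Ψ(w) = (σ²/2)·( v/w + (Ku+1)/(Kw(1−w)) + √(s_w)/(Kw(1−w)) ) for w ∈ (0,1), where s_w = K²(1−w)²v² + 2K(1−w)(1−2w)(Ku+1)v + (Ku+1)². Then the point w* = (K(2u+v)+2)/(K(4u+v)+4) lies in (0,1) and is the unique minimizer of E_Ψ on (0,1). -/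
/-- The E-optimal weight for prediction of the individual treatment effects in the
two-group case: `w* = (K(2u+v)+2)/(K(4u+v)+4)` lies in `(0,1)` and is the unique
minimizer of the E-criterion `E_Ψ` on `(0,1)`. -/
theorem stmt_16 (K : ℕ) (hK : 1 ≤ K)
    (σ2 u v : ℝ) (hσ : 0 < σ2) (hu : 0 < u) (hv : 0 < v)
    (s E : ℝ → ℝ)
    (hs : ∀ w : ℝ, s w = (K : ℝ) ^ 2 * (1 - w) ^ 2 * v ^ 2 +
        2 * (K : ℝ) * (1 - w) * (1 - 2 * w) * ((K : ℝ) * u + 1) * v +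
        ((K : ℝ) * u + 1) ^ 2)
    (hE : ∀ w : ℝ, E w = (σ2 / 2) * (v / w + ((K : ℝ) * u + 1) / ((K : ℝ) * w * (1 - w)) +
        Real.sqrt (s w) / ((K : ℝ) * w * (1 - w))))
    (wstar : ℝ)
    (hw : wstar = ((K : ℝ) * (2 * u + v) + 2) / ((K : ℝ) * (4 * u + v) + 4)) :
    wstar ∈ Set.Ioo (0 : ℝ) 1 ∧
      ∀ w ∈ Set.Ioo (0 : ℝ) 1, w ≠ wstar → E wstar < E w := by
  set k : ℝ := (K : ℝ) with hkdef
  have hk1 : (1 : ℝ) ≤ k := by simp only [hkdef]; exact_mod_cast hK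
  have hk0 : (0 : ℝ) < k := lt_of_lt_of_le one_pos hk1
  set n : ℝ := k * (2 * u + v) + 2 with hndef
  set d : ℝ := k * (4 * u + v) + 4 with hddef
  have hn : 0 < n := by positivity
  have hd : 0 < d := by positivity
  have hnd : n < d := by
    have : 0 < k * (2 * u) + 2 := by positivity
    simp only [hndef, hddef]; nlinarith
  have ha : 0 < k * u + 1 := by positivity
  -- wstar ∈ (0,1)
  have hws0 : 0 < wstar := by rw [hw]; exact div_pos hn hd
  have hws1 : wstar < 1 := by rw [hw]; exact (div_lt_one hd).mpr hnd
  -- value at wstar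
  have hswstar : s wstar = (k * u + 1) ^ 2 := by
    rw [hs, hw]
    field_simp
    ring
  have hsqrtws : Real.sqrt (s wstar) = k * u + 1 := by
    rw [hswstar, Real.sqrt_sq ha.le]
  have hws0' : wstar ≠ 0 := ne_of_gt hws0
  have h1ws : (1:ℝ) - wstar ≠ 0 := ne_of_gt (by linarith)
  have hrepws : E wstar = σ2 / (2 * (k * wstar * (1 - wstar))) *
      (k * v * (1 - wstar) + (k * u + 1) + Real.sqrt (s wstar)) := by
    rw [hE]
    field_simp
  have key : k * v * (1 - wstar) + (k * u + 1) + (k * u + 1) =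
      2 * d * wstar * (1 - wstar) := by
    rw [hw]
    field_simp
    ring
  have hMrepws : E wstar = σ2 * d / k := by
    rw [hrepws, hsqrtws, key]
    field_simp
  refine ⟨⟨hws0, hws1⟩, ?_⟩
  rintro w ⟨hw0, hw1⟩ hwne
  have h1w : 0 < 1 - w := by linarith
  have hp : 0 < k * w * (1 - w) := by positivity
  -- key quantity
  set T : ℝ := 2 * d * w * (1 - w) - k * v * (1 - w) - (k * u + 1) with hT
  -- key identity
  have hid : s w = T ^ 2 + 4 * w * (1 - w) * (d * w - n) ^ 2 := by
    rw [hs]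
    simp only [hT, hddef, hndef]
    ring
  have hdn : d * w - n ≠ 0 := by
    intro h
    apply hwne
    rw [hw]
    field_simp
    linarith
  have hpos : 0 < 4 * w * (1 - w) * (d * w - n) ^ 2 := by positivity
  have hsqrtT : T < Real.sqrt (s w) := by
    rcases lt_or_ge T 0 with h | h
    · exact lt_of_lt_of_le h (Real.sqrt_nonneg _)
    · have h2 : T ^ 2 < s w := by rw [hid]; linarith
      calc T = Real.sqrt (T ^ 2) := (Real.sqrt_sq h).symm
        _ < Real.sqrt (s w) := Real.sqrt_lt_sqrt (sq_nonneg T) h2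
  -- representation of E w
  have hrep : E w = (σ2 / (2 * (k * w * (1 - w)))) *
      (k * v * (1 - w) + (k * u + 1) + Real.sqrt (s w)) := by
    rw [hE]
    field_simp
  have hMrep : σ2 * d / k = (σ2 / (2 * (k * w * (1 - w)))) * (2 * d * w * (1 - w)) := by
    field_simp
  rw [hMrepws, hrep, hMrep]
  have hc : 0 < σ2 / (2 * (k * w * (1 - w))) := by positivity
  apply mul_lt_mul_of_pos_left _ hc
  simp only [hT] at hsqrtT
  linarith
end

section
/- Let K be a positive integer and N > 0 real. Define w*_E(u,v) = (K(2u+v)+2)/(K(4u+v)+4) and w*_D(u,v) = 1/(N·t(u,v)) + 1/2 + √( 1/(N²·t(u,v)²) + 1/4 ) with t(u,v) = ln((Ku+1)/(K(u+v)+1)), for u, v > 0. Then: (i) for fixed v > 0, w*_E(u,v) → 1/2 and w*_D(u,v) → 1/2 as u → ∞; (ii) for fixed u > 0, w*_E(u,v) → 1 and w*_D(u,v) → 1 as v → ∞. -/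
open Filter

lemma ratio_lim (a b c d : ℝ) (hc : c ≠ 0) :
    Tendsto (fun u : ℝ => (a * u + b) / (c * u + d)) atTop (nhds (a / c)) := by
  have h1 : Tendsto (fun u : ℝ => a + b * u⁻¹) atTop (nhds a) := by
    simpa using tendsto_const_nhds.add (tendsto_inv_atTop_zero.const_mul b)
  have h2 : Tendsto (fun u : ℝ => c + d * u⁻¹) atTop (nhds c) := by
    simpa using tendsto_const_nhds.add (tendsto_inv_atTop_zero.const_mul d)
  have h := h1.div h2 hc
  refine h.congr' ?_
  filter_upwards [eventually_gt_atTop (0:ℝ)] with u hu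
  have hu' : u ≠ 0 := ne_of_gt hu
  have e1 : a + b * u⁻¹ = (a * u + b) / u := by field_simp
  have e2 : c + d * u⁻¹ = (c * u + d) / u := by field_simp
  simp only [Pi.div_apply]
  rw [e1, e2, div_div_div_cancel_right₀ hu']

lemma auxA : Tendsto (fun x : ℝ => x + Real.sqrt (x ^ 2 + 1 / 4)) atBot (nhds 0) := by
  have key : ∀ x : ℝ, x + Real.sqrt (x ^ 2 + 1 / 4)
      = (1 / 4) / (Real.sqrt (x ^ 2 + 1 / 4) - x) := by
    intro x
    have h1 : (0:ℝ) ≤ x ^ 2 + 1 / 4 := by positivity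
    have hs : Real.sqrt (x ^ 2 + 1 / 4) ^ 2 = x ^ 2 + 1 / 4 := Real.sq_sqrt h1
    have hgt : x < Real.sqrt (x ^ 2 + 1 / 4) := by
      have habs : |x| < Real.sqrt (x ^ 2 + 1 / 4) := by
        rw [← Real.sqrt_sq_eq_abs]
        exact Real.sqrt_lt_sqrt (sq_nonneg x) (by linarith)
      exact lt_of_le_of_lt (le_abs_self x) habs
    have hne : Real.sqrt (x ^ 2 + 1 / 4) - x ≠ 0 := by linarith
    rw [eq_div_iff hne]
    linear_combination hs
  simp only [key]
  have hd : Tendsto (fun x : ℝ => Real.sqrt (x ^ 2 + 1 / 4) - x) atBot atTop := by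
    apply tendsto_atTop_mono (fun x => ?_) tendsto_neg_atBot_atTop
    have := Real.sqrt_nonneg (x ^ 2 + 1 / 4)
    linarith
  have h := hd.inv_tendsto_atTop.const_mul (1/4 : ℝ)
  simpa [div_eq_mul_inv] using h

/-- The function `x ↦ x + 1/2 + √(x² + 1/4)`. -/
private noncomputable def g (x : ℝ) : ℝ := x + 1 / 2 + Real.sqrt (x ^ 2 + 1 / 4)

lemma g_atBot : Tendsto g atBot (nhds (1 / 2)) := by
  have h := auxA.add_const (1/2 : ℝ)
  rw [zero_add] at h
  refine h.congr fun x => ?_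
  simp only [g]; ring

lemma g_cont : Continuous g := by
  unfold g
  continuity

lemma g_zero : g 0 = 1 := by
  have : Real.sqrt ((0:ℝ) ^ 2 + 1 / 4) = 1 / 2 := by
    rw [show ((0:ℝ) ^ 2 + 1 / 4) = (1/2)^2 by norm_num]
    rw [Real.sqrt_sq (by norm_num)]
  unfold g
  rw [this]
  norm_num

/-- Limiting behavior of the D- and E-optimal weights for prediction of the
individual treatment effects in the two-group case: (i) as `u → ∞` both tend to
`1/2`; (ii) as `v → ∞` both tend to `1`. -/
theorem stmt_17 (K : ℕ) (hK : 1 ≤ K) (N : ℝ) (hN : 0 < N)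
    (t wD wE : ℝ → ℝ → ℝ)
    (ht : ∀ u v : ℝ, t u v = Real.log (((K : ℝ) * u + 1) / ((K : ℝ) * (u + v) + 1)))
    (hwE : ∀ u v : ℝ, wE u v =
        ((K : ℝ) * (2 * u + v) + 2) / ((K : ℝ) * (4 * u + v) + 4))
    (hwD : ∀ u v : ℝ, wD u v = 1 / (N * t u v) + 1 / 2 +
        Real.sqrt (1 / (N ^ 2 * (t u v) ^ 2) + 1 / 4)) :
    (∀ v : ℝ, 0 < v →
      Tendsto (fun u : ℝ => wE u v) atTop (nhds (1 / 2)) ∧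
      Tendsto (fun u : ℝ => wD u v) atTop (nhds (1 / 2))) ∧
    (∀ u : ℝ, 0 < u →
      Tendsto (fun v : ℝ => wE u v) atTop (nhds 1) ∧
      Tendsto (fun v : ℝ => wD u v) atTop (nhds 1)) := by
  have hK0 : (0:ℝ) < (K:ℝ) := by exact_mod_cast Nat.lt_of_lt_of_le Nat.zero_lt_one hK
  -- wD as g ∘ (1/(N t))
  have hwDg : ∀ u v : ℝ, wD u v = g (1 / (N * t u v)) := by
    intro u v
    rw [hwD u v]
    unfold g
    congr 2
    rw [div_pow, one_pow, mul_pow]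
  constructor
  · intro v hv
    constructor
    · -- wE, u → ∞
      have h := ratio_lim (2*(K:ℝ)) ((K:ℝ)*v+2) (4*(K:ℝ)) ((K:ℝ)*v+4) (by positivity)
      have hlim : (2*(K:ℝ))/(4*(K:ℝ)) = 1/2 := by
        rw [div_eq_div_iff (by positivity) (by norm_num)]; ring
      rw [hlim] at h
      refine h.congr fun u => ?_
      rw [hwE u v]; ring_nf
    · -- wD, u → ∞
      have hr : Tendsto (fun u : ℝ => ((K:ℝ)*u+1)/((K:ℝ)*(u+v)+1)) atTop (nhds 1) := by
        have h := ratio_lim (K:ℝ) 1 (K:ℝ) ((K:ℝ)*v+1) (ne_of_gt hK0)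
        rw [div_self (ne_of_gt hK0)] at h
        refine h.congr fun u => ?_
        ring_nf
      have hNt : Tendsto (fun u : ℝ => N * t u v) atTop (nhdsWithin 0 (Set.Iio 0)) := by
        rw [tendsto_nhdsWithin_iff]
        constructor
        · have hlog : Tendsto (fun u : ℝ => Real.log (((K:ℝ)*u+1)/((K:ℝ)*(u+v)+1)))
              atTop (nhds 0) := by
            have := ((Real.continuousAt_log one_ne_zero).tendsto).comp hr
            simpa [Function.comp_def] using this
          have := hlog.const_mul N
          simp only [mul_zero] at this
          refine this.congr fun u => ?_
          rw [ht u v]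
        · filter_upwards [eventually_gt_atTop (0:ℝ)] with u hu
          have hnum : (0:ℝ) < (K:ℝ)*u+1 := by positivity
          have hlt : (K:ℝ)*u+1 < (K:ℝ)*(u+v)+1 := by nlinarith
          have hlog_neg : Real.log (((K:ℝ)*u+1)/((K:ℝ)*(u+v)+1)) < 0 :=
            Real.log_neg (by positivity) ((div_lt_one (by linarith)).2 hlt)
          rw [ht u v] at *
          exact mul_neg_of_pos_of_neg hN hlog_neg
      have hxpos : Tendsto (fun u : ℝ => -(N * t u v)) atTop (nhdsWithin 0 (Set.Ioi 0)) := by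
        rw [tendsto_nhdsWithin_iff] at hNt ⊢
        refine ⟨by simpa using hNt.1.neg, ?_⟩
        filter_upwards [hNt.2] with u hu
        simpa using hu
      have hinv : Tendsto (fun u : ℝ => (-(N * t u v))⁻¹) atTop atTop :=
        hxpos.inv_tendsto_nhdsGT_zero
      have hx : Tendsto (fun u : ℝ => 1 / (N * t u v)) atTop atBot := by
        have h := tendsto_neg_atTop_atBot.comp hinv
        refine h.congr fun w => ?_
        simp [Function.comp, one_div, inv_neg]
      have := g_atBot.comp hx
      refine this.congr fun u => ?_
      rw [hwDg u v]
      rfl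
  · intro u hu
    constructor
    · -- wE, v → ∞
      have h := ratio_lim ((K:ℝ)) (2*(K:ℝ)*u+2) ((K:ℝ)) (4*(K:ℝ)*u+4) (ne_of_gt hK0)
      rw [div_self (ne_of_gt hK0)] at h
      refine h.congr fun v => ?_
      rw [hwE u v]; ring_nf
    · -- wD, v → ∞
      have hden : Tendsto (fun v : ℝ => (K:ℝ)*(u+v)+1) atTop atTop := by
        apply tendsto_atTop_add_const_right
        apply Tendsto.const_mul_atTop hK0
        exact tendsto_atTop_add_const_left _ _ tendsto_id
      have hr : Tendsto (fun v : ℝ => ((K:ℝ)*u+1)/((K:ℝ)*(u+v)+1)) atTop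
          (nhdsWithin 0 (Set.Ioi 0)) := by
        rw [tendsto_nhdsWithin_iff]
        refine ⟨Tendsto.const_div_atTop hden _, ?_⟩
        filter_upwards [hden.eventually_gt_atTop 0] with v hv
        exact div_pos (by positivity) hv
      have hlog : Tendsto (fun v : ℝ => t u v) atTop atBot := by
        have := Real.tendsto_log_nhdsGT_zero.comp hr
        refine this.congr fun v => ?_
        rw [ht u v]; rfl
      have hNt : Tendsto (fun v : ℝ => N * t u v) atTop atBot :=
        Tendsto.const_mul_atBot hN hlog
      have hx : Tendsto (fun v : ℝ => 1 / (N * t u v)) atTop (nhds 0) := by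
        have h := ((tendsto_neg_atBot_atTop.comp hNt).inv_tendsto_atTop).neg
        rw [neg_zero] at h
        refine h.congr fun w => ?_
        simp [Function.comp, one_div, inv_neg]
      have hg := (g_cont.tendsto 0).comp hx
      rw [g_zero] at hg
      refine hg.congr fun v => ?_
      rw [hwDg u v]
      rfl
end

section
/- Let J ≥ 2 be an integer, K a positive integer, σ² > 0, u > 0, v > 0, and let n ≥ 1, m ≥ 1 be integers with N = (J−1)n + m. Define f(j) ∈ ℝ^J by f(j) = (1, e_jᵀ)ᵀ for j = 1,…,J−1 and f(J) = (1, 0,…,0)ᵀ, where e_j is the j-th standard unit vector of length J−1. Set r_j = n for j = 1,…,J−1 and r_J = m. Let X be the NK×J matrix obtained by vertically stacking the blocks 𝟙_{r_j} ⊗ (𝟙_K · f(j)ᵀ) for j = 1,…,J; let Z be the NK×NJ block-diagonal matrix with blocks I_{r_j} ⊗ (𝟙_K · f(j)ᵀ) for j = 1,…,J; let G = σ²·I_N ⊗ block-diag(u, v·I_{J−1}) and R = σ²·I_{NK}. Then the J×J matrix Xᵀ(ZGZᵀ + R)⁻¹X is invertible and ( Xᵀ(ZGZᵀ + R)⁻¹X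 )⁻¹ = (σ²(Ku+1)/(Km)) · [[ 1 , −𝟙_{J−1}ᵀ ], [ −𝟙_{J−1} , ((K(u+v)+1)m/((Ku+1)n))·I_{J−1} + 𝟙_{J−1}𝟙_{J−1}ᵀ ]]. -/
open Matrix

/-- Individuals: `n` in each of the `J-1` treatment groups followed by `m` in the
control group. -/
abbrev MMInd (J n m : ℕ) := (Fin (J - 1) × Fin n) ⊕ Fin m

/-- Observations: `K` observations per individual. -/
abbrev MMObs (J n m K : ℕ) := MMInd J n m × Fin K

/-- Fixed/random effect coordinates: intercept plus the `J-1` treatment effects. -/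
abbrev MMEff (J : ℕ) := Unit ⊕ Fin (J - 1)

/-- The group of an individual: one of the `J-1` treatment groups or the control
group. -/
def MMGrp (J n m : ℕ) : MMInd J n m → Fin (J - 1) ⊕ Unit
  | Sum.inl (j, _) => Sum.inl j
  | Sum.inr _ => Sum.inr ()

/-- The regression functions: `f(j) = (1, e_jᵀ)ᵀ` for treatment group `j` and
`f(J) = (1, 0, …, 0)ᵀ` for the control group. -/
def MMf (J : ℕ) : Fin (J - 1) ⊕ Unit → MMEff J → ℝ
  | _, Sum.inl _ => 1
  | Sum.inl j, Sum.inr a => if a = j then 1 else 0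
  | Sum.inr _, Sum.inr _ => 0

/-- The fixed effects design matrix `X`: vertical stack of the blocks
`𝟙_{r_j} ⊗ (𝟙_K·f(j)ᵀ)`, `j = 1, …, J`. -/
def MMX (J n m K : ℕ) : Matrix (MMObs J n m K) (MMEff J) ℝ :=
  Matrix.of fun p c => MMf J (MMGrp J n m p.1) c

/-- The random effects design matrix `Z`: block diagonal with blocks
`I_{r_j} ⊗ (𝟙_K·f(j)ᵀ)`, `j = 1, …, J`. -/
def MMZ (J n m K : ℕ) : Matrix (MMObs J n m K) (MMInd J n m × MMEff J) ℝ :=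
  Matrix.of fun p q => if p.1 = q.1 then MMf J (MMGrp J n m p.1) q.2 else 0

/-- The covariance matrix of the random effects:
`G = σ²·I_N ⊗ block-diag(u, v·I_{J-1})`. -/
noncomputable def MMG (J n m : ℕ) (σ2 u v : ℝ) :
    Matrix (MMInd J n m × MMEff J) (MMInd J n m × MMEff J) ℝ :=
  Matrix.of fun p q =>
    if p = q then σ2 * (match p.2 with | Sum.inl _ => u | Sum.inr _ => v) else 0

/-- group-wise scaled variance -/
def MMcg (J : ℕ) (u v : ℝ) : Fin (J - 1) ⊕ Unit → ℝ
  | Sum.inl _ => u + v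
  | Sum.inr _ => u

lemma MMcg_pos {J : ℕ} {u v : ℝ} (hu : 0 < u) (hv : 0 < v) (g : Fin (J-1) ⊕ Unit) :
    0 < MMcg J u v g := by cases g <;> simp [MMcg] <;> positivity

lemma MMG_eq_diagonal (J n m : ℕ) (σ2 u v : ℝ) :
    MMG J n m σ2 u v = Matrix.diagonal
      (fun q : MMInd J n m × MMEff J =>
        σ2 * (match q.2 with | Sum.inl _ => u | Sum.inr _ => v)) := rfl

lemma MMZGZ (J n m K : ℕ) (σ2 u v : ℝ) :
    MMZ J n m K * MMG J n m σ2 u v * (MMZ J n m K)ᵀ =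
      Matrix.of fun p q : MMObs J n m K =>
        if p.1 = q.1 then σ2 * MMcg J u v (MMGrp J n m p.1) else 0 := by
  ext p q
  rw [MMG_eq_diagonal, Matrix.mul_assoc, Matrix.mul_apply]
  simp only [Matrix.diagonal_mul, Matrix.transpose_apply,
    MMZ, Matrix.of_apply, Fintype.sum_prod_type]
  by_cases h : p.1 = q.1
  · rw [if_pos h]
    rw [Fintype.sum_eq_single p.1 (fun b hb => by
      apply Finset.sum_eq_zero; intro e _
      rw [if_neg (fun hh => hb hh.symm), zero_mul])]
    simp only [if_pos rfl, ← h, if_pos rfl]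
    rw [Fintype.sum_sum_type]
    rcases hg : MMGrp J n m p.1 with j | _ <;>
      simp [MMf, hg, Finset.sum_ite_eq', MMcg, mul_comm] <;> ring
  · rw [if_neg h]
    apply Finset.sum_eq_zero; intro i _
    apply Finset.sum_eq_zero; intro e _
    by_cases hp : p.1 = i
    · rw [if_neg (fun hq : q.1 = i => h (hp.trans hq.symm)), mul_zero, mul_zero]
    · rw [if_neg hp, zero_mul]

/-- Explicit inverse of `V = ZGZᵀ + σ²I`. -/
noncomputable def MMW (J n m K : ℕ) (σ2 u v : ℝ) :
    Matrix (MMObs J n m K) (MMObs J n m K) ℝ :=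
  Matrix.of fun p q =>
    σ2⁻¹ * ((if p = q then 1 else 0) -
      (if p.1 = q.1 then MMcg J u v (MMGrp J n m p.1) /
        (1 + (K : ℝ) * MMcg J u v (MMGrp J n m p.1)) else 0))

lemma MMV_mul_W (J n m K : ℕ) (σ2 u v : ℝ) (hσ : 0 < σ2) (hu : 0 < u) (hv : 0 < v) :
    (MMZ J n m K * MMG J n m σ2 u v * (MMZ J n m K)ᵀ +
        σ2 • (1 : Matrix (MMObs J n m K) (MMObs J n m K) ℝ)) *
      MMW J n m K σ2 u v = 1 := by
  rw [MMZGZ]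
  ext p r
  set c := MMcg J u v (MMGrp J n m p.1) with hc
  have hcpos : 0 < c := MMcg_pos hu hv _
  have hd : 0 < 1 + (K : ℝ) * c := by positivity
  rw [Matrix.mul_apply]
  simp only [Matrix.add_apply, Matrix.smul_apply, Matrix.one_apply, Matrix.of_apply,
    MMW, smul_eq_mul, Fintype.sum_prod_type]
  rw [Fintype.sum_eq_single p.1 (fun b hb => Finset.sum_eq_zero fun k _ => by
    rw [if_neg (fun hh => hb hh.symm),
      if_neg (fun hh : p = (b, k) => hb (congrArg Prod.fst hh).symm)]
    simp)]
  rw [← hc]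
  by_cases hpr : p.1 = r.1
  · simp only [Prod.ext_iff, hpr, if_true, eq_self_iff_true, true_and]
    simp only [mul_sub, add_mul, mul_ite, ite_mul, mul_zero, zero_mul, mul_one,
      Finset.sum_sub_distrib, Finset.sum_add_distrib, Finset.sum_ite_eq',
      Finset.sum_const, Finset.mem_univ, if_true, Finset.card_univ, Fintype.card_fin,
      nsmul_eq_mul]
    by_cases h2 : p.2 = r.2
    · simp only [h2, if_true, eq_self_iff_true, Finset.sum_ite_eq, Finset.mem_univ]
      field_simp
      ring
    · simp only [if_neg h2, Finset.sum_ite_eq, Finset.mem_univ, if_true]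
      field_simp
      ring
  · simp only [Prod.ext_iff, hpr, if_false, false_and, and_false]
    apply Finset.sum_eq_zero; intro k _; simp

lemma MMW_mul_X (J n m K : ℕ) (σ2 u v : ℝ) (hσ : 0 < σ2) (hu : 0 < u) (hv : 0 < v) :
    MMW J n m K σ2 u v * MMX J n m K =
      Matrix.of fun (p : MMObs J n m K) (e : MMEff J) =>
        σ2⁻¹ / (1 + (K : ℝ) * MMcg J u v (MMGrp J n m p.1)) *
          MMf J (MMGrp J n m p.1) e := by
  ext p e
  have hcpos : 0 < MMcg J u v (MMGrp J n m p.1) := MMcg_pos hu hv _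
  have hd : 0 < 1 + (K : ℝ) * MMcg J u v (MMGrp J n m p.1) := by positivity
  rw [Matrix.mul_apply]
  simp only [MMW, MMX, Matrix.of_apply, Fintype.sum_prod_type]
  rw [Fintype.sum_eq_single p.1 (fun b hb => Finset.sum_eq_zero fun k _ => by
    rw [if_neg (fun hh : p = (b, k) => hb (congrArg Prod.fst hh).symm),
      if_neg (fun hh => hb hh.symm)]
    simp)]
  simp only [Prod.ext_iff, eq_self_iff_true, true_and, if_true]
  simp only [mul_sub, sub_mul, ite_mul, zero_mul, one_mul, mul_ite, mul_zero, mul_one,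
    Finset.sum_sub_distrib, Finset.sum_ite_eq', Finset.mem_univ, if_true,
    Finset.sum_const, Finset.card_univ, Fintype.card_fin, nsmul_eq_mul, Finset.sum_ite_eq]
  field_simp
  ring

noncomputable def MMa (n K : ℕ) (σ2 u v : ℝ) : ℝ :=
  (n : ℝ) * K * σ2⁻¹ / (1 + (K : ℝ) * (u + v))

noncomputable def MMb (m K : ℕ) (σ2 u : ℝ) : ℝ :=
  (m : ℝ) * K * σ2⁻¹ / (1 + (K : ℝ) * u)

noncomputable def MMA0 (J n m K : ℕ) (σ2 u v : ℝ) : Matrix (MMEff J) (MMEff J) ℝ :=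
  Matrix.fromBlocks
    (Matrix.of fun _ _ => ((J - 1 : ℕ) : ℝ) * MMa n K σ2 u v + MMb m K σ2 u)
    (Matrix.of fun _ _ => MMa n K σ2 u v)
    (Matrix.of fun _ _ => MMa n K σ2 u v)
    (MMa n K σ2 u v • 1)

lemma MMXWX (J n m K : ℕ) (σ2 u v : ℝ) (hσ : 0 < σ2) (hu : 0 < u) (hv : 0 < v) :
    (MMX J n m K)ᵀ * (MMW J n m K σ2 u v * MMX J n m K) = MMA0 J n m K σ2 u v := by
  rw [MMW_mul_X J n m K σ2 u v hσ hu hv]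
  ext e e'
  rw [Matrix.mul_apply]
  simp only [Matrix.transpose_apply, MMX, Matrix.of_apply, Fintype.sum_prod_type,
    Fintype.sum_sum_type, Finset.sum_const, Finset.card_univ, Fintype.card_fin,
    nsmul_eq_mul]
  cases e with
  | inl e0 =>
    cases e' with
    | inl e1 =>
      simp [MMf, MMGrp, MMcg, MMA0, MMa, MMb]
      ring
    | inr e1 =>
      simp [MMf, MMGrp, MMcg, MMA0, MMa, MMb, Finset.sum_ite_eq, Finset.sum_ite_eq']
      ring
  | inr e0 =>
    cases e' with
    | inl e1 =>
      simp [MMf, MMGrp, MMcg, MMA0, MMa, MMb, Finset.sum_ite_eq, Finset.sum_ite_eq']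
      ring
    | inr e1 =>
      simp [MMf, MMGrp, MMcg, MMA0, MMa, MMb, Finset.sum_ite_eq, Finset.sum_ite_eq',
        Matrix.smul_apply, Matrix.one_apply, mul_ite, ite_mul, mul_zero, zero_mul]
      by_cases h : e0 = e1 <;> simp [h] <;> ring

lemma MMA0_mul_B (J K n m : ℕ) (hK : 1 ≤ K) (hn : 1 ≤ n) (hm : 1 ≤ m)
    (σ2 u v : ℝ) (hσ : 0 < σ2) (hu : 0 < u) (hv : 0 < v) :
    MMA0 J n m K σ2 u v *
      ((σ2 * ((K : ℝ) * u + 1) / ((K : ℝ) * (m : ℝ))) •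
        Matrix.fromBlocks
          (1 : Matrix Unit Unit ℝ)
          (-(Matrix.of fun _ _ => (1 : ℝ)))
          (-(Matrix.of fun _ _ => (1 : ℝ)))
          (((((K : ℝ) * (u + v) + 1) * (m : ℝ)) / ((((K : ℝ) * u + 1)) * (n : ℝ))) •
              (1 : Matrix (Fin (J - 1)) (Fin (J - 1)) ℝ) +
            Matrix.of fun _ _ => (1 : ℝ))) = 1 := by
  have hK0 : ((K : ℕ) : ℝ) ≠ 0 := Nat.cast_ne_zero.mpr (by omega)
  have hm0 : ((m : ℕ) : ℝ) ≠ 0 := Nat.cast_ne_zero.mpr (by omega)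
  have hn0 : ((n : ℕ) : ℝ) ≠ 0 := Nat.cast_ne_zero.mpr (by omega)
  have hσ0 : σ2 ≠ 0 := ne_of_gt hσ
  have hKn : (0:ℝ) ≤ (K : ℝ) := Nat.cast_nonneg K
  have h1 : (K : ℝ) * u + 1 ≠ 0 := by positivity
  have h2 : 1 + (K : ℝ) * u ≠ 0 := by positivity
  have h3 : 1 + (K : ℝ) * (u + v) ≠ 0 := by positivity
  ext e e''
  rw [Matrix.mul_apply, Fintype.sum_sum_type]
  cases e with
  | inl e0 =>
    cases e'' with
    | inl e1 =>
      simp only [MMA0, Matrix.smul_apply, Matrix.add_apply, Matrix.neg_apply,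
        Matrix.of_apply, smul_eq_mul, Matrix.one_apply,
        Matrix.fromBlocks_apply₁₁, Matrix.fromBlocks_apply₁₂,
        Matrix.fromBlocks_apply₂₁, Matrix.fromBlocks_apply₂₂, MMa, MMb,
        reduceCtorEq, if_false,
        eq_iff_true_of_subsingleton, if_true, mul_ite, ite_mul, mul_zero, zero_mul,
        mul_neg, mul_one, Finset.sum_const, Finset.card_univ, Fintype.card_fin,
        nsmul_eq_mul, Finset.sum_ite_eq, Finset.sum_ite_eq', Finset.mem_univ,
        Finset.sum_neg_distrib, Finset.sum_add_distrib,
        Fintype.card_unit, Nat.cast_one]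
      field_simp
      ring
    | inr e1 =>
      simp only [MMA0, Matrix.smul_apply, Matrix.add_apply, Matrix.neg_apply,
        Matrix.of_apply, smul_eq_mul, Matrix.one_apply,
        Matrix.fromBlocks_apply₁₁, Matrix.fromBlocks_apply₁₂,
        Matrix.fromBlocks_apply₂₁, Matrix.fromBlocks_apply₂₂, MMa, MMb,
        reduceCtorEq, if_false,
        eq_iff_true_of_subsingleton, if_true, mul_add, mul_ite, ite_mul, mul_zero,
        zero_mul, mul_neg, mul_one, Finset.sum_const, Finset.card_univ,
        Fintype.card_fin, nsmul_eq_mul, Finset.sum_ite_eq, Finset.sum_ite_eq',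
        Finset.mem_univ, Finset.sum_neg_distrib, Finset.sum_add_distrib,
        Fintype.card_unit, Nat.cast_one]
      field_simp
      ring
  | inr e0 =>
    cases e'' with
    | inl e1 =>
      simp only [MMA0, Matrix.smul_apply, Matrix.add_apply, Matrix.neg_apply,
        Matrix.of_apply, smul_eq_mul, Matrix.one_apply,
        Matrix.fromBlocks_apply₁₁, Matrix.fromBlocks_apply₁₂,
        Matrix.fromBlocks_apply₂₁, Matrix.fromBlocks_apply₂₂, MMa, MMb,
        reduceCtorEq, if_false,
        eq_iff_true_of_subsingleton, if_true, mul_ite, ite_mul, mul_zero, zero_mul,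
        mul_neg, mul_one, one_mul, Finset.sum_const, Finset.card_univ,
        Fintype.card_fin, nsmul_eq_mul, Finset.sum_ite_eq, Finset.sum_ite_eq',
        Finset.mem_univ, Finset.sum_neg_distrib, Finset.sum_add_distrib,
        Fintype.card_unit, Nat.cast_one]
      field_simp
      ring
    | inr e1 =>
      simp only [MMA0, Matrix.smul_apply, Matrix.add_apply, Matrix.neg_apply,
        Matrix.of_apply, smul_eq_mul, Matrix.one_apply,
        Matrix.fromBlocks_apply₁₁, Matrix.fromBlocks_apply₁₂,
        Matrix.fromBlocks_apply₂₁, Matrix.fromBlocks_apply₂₂, MMa, MMb,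
        reduceCtorEq, if_false,
        eq_iff_true_of_subsingleton, if_true, mul_add, mul_ite, ite_mul, mul_zero,
        zero_mul, mul_neg, mul_one, one_mul, Finset.sum_const, Finset.card_univ,
        Fintype.card_fin, nsmul_eq_mul, Finset.sum_ite_eq, Finset.sum_ite_eq',
        Finset.mem_univ, Finset.sum_neg_distrib, Finset.sum_add_distrib,
        Fintype.card_unit, Nat.cast_one]
      by_cases h : e0 = e1
      · simp only [h, if_pos rfl, ↓reduceIte]
        field_simp
        ring
      · simp [h]

/-- The covariance matrix `(Xᵀ(ZGZᵀ + R)⁻¹X)⁻¹` of the BLUE of the fixed effects in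
the multiple group random coefficient regression model, where `R = σ²·I_{NK}`
(formula (24) in the Appendix). -/
theorem stmt_18 (J K : ℕ) (hJ : 2 ≤ J) (hK : 1 ≤ K)
    (σ2 u v : ℝ) (hσ : 0 < σ2) (hu : 0 < u) (hv : 0 < v)
    (n m N : ℕ) (hn : 1 ≤ n) (hm : 1 ≤ m) (hN : N = (J - 1) * n + m)
    (A : Matrix (MMEff J) (MMEff J) ℝ)
    (hA : A = (MMX J n m K)ᵀ *
        (MMZ J n m K * MMG J n m σ2 u v * (MMZ J n m K)ᵀ +
          σ2 • (1 : Matrix (MMObs J n m K) (MMObs J n m K) ℝ))⁻¹ *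
        MMX J n m K) :
    IsUnit A ∧
      A⁻¹ = (σ2 * ((K : ℝ) * u + 1) / ((K : ℝ) * (m : ℝ))) •
        Matrix.fromBlocks
          (1 : Matrix Unit Unit ℝ)
          (-(Matrix.of fun _ _ => (1 : ℝ)))
          (-(Matrix.of fun _ _ => (1 : ℝ)))
          (((((K : ℝ) * (u + v) + 1) * (m : ℝ)) / ((((K : ℝ) * u + 1)) * (n : ℝ))) •
              (1 : Matrix (Fin (J - 1)) (Fin (J - 1)) ℝ) +
            Matrix.of fun _ _ => (1 : ℝ)) := by
  have hVinv := Matrix.inv_eq_right_inv (MMV_mul_W J n m K σ2 u v hσ hu hv)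
  rw [hVinv, Matrix.mul_assoc, MMXWX J n m K σ2 u v hσ hu hv] at hA
  have hAB : A * ((σ2 * ((K : ℝ) * u + 1) / ((K : ℝ) * (m : ℝ))) •
        Matrix.fromBlocks
          (1 : Matrix Unit Unit ℝ)
          (-(Matrix.of fun _ _ => (1 : ℝ)))
          (-(Matrix.of fun _ _ => (1 : ℝ)))
          (((((K : ℝ) * (u + v) + 1) * (m : ℝ)) / ((((K : ℝ) * u + 1)) * (n : ℝ))) •
              (1 : Matrix (Fin (J - 1)) (Fin (J - 1)) ℝ) +
            Matrix.of fun _ _ => (1 : ℝ))) = 1 := by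
    rw [hA]; exact MMA0_mul_B J K n m hK hn hm σ2 u v hσ hu hv
  exact ⟨⟨⟨A, _, hAB, mul_eq_one_comm.mp hAB⟩, rfl⟩, Matrix.inv_eq_right_inv hAB⟩
end
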